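/- arXiv:2212.13001 — 7 statements merged into one kernel-verified Lean document; each statement's English description precedes it below -/
import Mathlib

section
/- Let u^k ∈ U be arbitrary and let u^{k+1} = T u^k be one step of the preconditioned Douglas–Rachford (PDR) iteration with transitional variables x_test^{k+1}, y_test^{k+1}. Then (1/σ)⟨x^{k+1} − x̄^{k+1}, x_test^{k+1}⟩ + (1/τ)⟨y^{k+1} − ȳ^{k+1}, y_test^{k+1}⟩ = ⟨u^k − u^{k+1}, u^{k+1}⟩_M. -/
open scoped RealInnerProductSpace

/-- **Lemma 2.1 (Bredies–Sun).** For one step of the preconditioned Douglas–Rachford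
(PDR) iteration `u^{k+1} = 𝒯 u^k` with transitional variables `x_test^{k+1}, y_test^{k+1}`,
one has
`(1/σ)⟨x^{k+1} − x̄^{k+1}, x_test^{k+1}⟩ + (1/τ)⟨y^{k+1} − ȳ^{k+1}, y_test^{k+1}⟩
  = ⟨u^k − u^{k+1}, u^{k+1}⟩_𝐌`. -/
theorem stmt_0
    {X Y : Type*}
    [NormedAddCommGroup X] [InnerProductSpace ℝ X] [CompleteSpace X]
    [NormedAddCommGroup Y] [InnerProductSpace ℝ Y] [CompleteSpace Y]
    -- the saddle-point problem data
    (F : X → ℝ) (G : Y → ℝ)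
    (hF : ConvexOn ℝ Set.univ F) (hFlsc : LowerSemicontinuous F)
    (hG : ConvexOn ℝ Set.univ G) (hGlsc : LowerSemicontinuous G)
    (K : X →L[ℝ] Y)
    -- step sizes and preconditioners
    (σ τ : ℝ) (hσ : 0 < σ) (hτ : 0 < τ)
    (N₁ : X →L[ℝ] X) (N₂ : Y →L[ℝ] Y)
    (hN₁sa : IsSelfAdjoint N₁) (hN₂sa : IsSelfAdjoint N₂)
    (hN₁ : ∀ v : X, ‖v‖ ^ 2 ≤ ⟪N₁ v, v⟫)
    (hN₂ : ∀ v : Y, ‖v‖ ^ 2 ≤ ⟪N₂ v, v⟫)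
    -- one PDR step: input `u^k = (x, y, xb, yb)`, output `u^{k+1} = (x', y', xb', yb')`,
    -- transitional variables `(xt, yt)`
    (x x' xt xb xb' : X) (y y' yt yb yb' : Y)
    (hx' : N₁ x' = (N₁ x - x) + xb - σ • (ContinuousLinearMap.adjoint K) y')
    (hy' : N₂ y' = (N₂ y - y) + yb + τ • K x')
    -- `xt = (I + σ∂F)⁻¹(2x' − xb)`, i.e. `2x' − xb − xt ∈ σ∂F(xt)`
    (hxt : ∀ w : X, σ * F xt + ⟪(2 : ℝ) • x' - xb - xt, w - xt⟫ ≤ σ * F w)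
    -- `yt = (I + τ∂G)⁻¹(2y' − yb)`, i.e. `2y' − yb − yt ∈ τ∂G(yt)`
    (hyt : ∀ w : Y, τ * G yt + ⟪(2 : ℝ) • y' - yb - yt, w - yt⟫ ≤ τ * G w)
    (hxb' : xb' = xb + xt - x')
    (hyb' : yb' = yb + yt - y') :
    (1 / σ) * ⟪x' - xb', xt⟫ + (1 / τ) * ⟪y' - yb', yt⟫
      = (1 / σ) * (⟪N₁ (x - x') - (x - x'), x'⟫ + ⟪xb - xb', xb'⟫)
        + (1 / τ) * (⟪N₂ (y - y') - (y - y'), y'⟫ + ⟪yb - yb', yb'⟫) := by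
  subst hxb' hyb'
  have e1 : N₁ (x - x') - (x - x')
      = x' - xb + σ • (ContinuousLinearMap.adjoint K) y' := by
    rw [map_sub, hx']; abel
  have e2 : N₂ (y - y') - (y - y') = y' - yb - τ • K x' := by
    rw [map_sub, hy']; abel
  rw [e1, e2]
  have hadj : ⟪(ContinuousLinearMap.adjoint K) y', x'⟫ = ⟪K x', y'⟫ := by
    rw [ContinuousLinearMap.adjoint_inner_left, real_inner_comm]
  simp only [inner_sub_left, inner_sub_right, inner_add_left, inner_add_right,
    real_inner_smul_left, hadj]
  field_simp
  ring_nf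
  linear_combination (τ * real_inner_comm x' xb + τ * real_inner_comm xb xt
    + τ * real_inner_comm xt x' + σ * real_inner_comm y' yb
    + σ * real_inner_comm yb yt + σ * real_inner_comm yt y')
end

section
/- Let u = (x,y,x̄,ȳ) with (x,y) ∈ dom F × dom G, x̄ = x + σK*y and ȳ = y − τKx. For any u^k ∈ U, with u^{k+1} = T u^k and transitional variables x_test^{k+1}, y_test^{k+1}, one has L(x_test^{k+1}, y) − L(x, y_test^{k+1}) ≤ ⟨u^k − u^{k+1}, u^{k+1} − u⟩_M = (1/2)( ‖u^k − u‖²_M − ‖u^{k+1} − u‖²_M − ‖u^{k+1} − u^k‖²_M ). -/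
/-!
The transitional variables satisfy the resolvent inequalities
`σ F(x_test) + ⟨2x⁺ − x̄ − x_test, w − x_test⟩ ≤ σ F(w)` and the analogue for `G`.
Substituting the PDR update into `⟨u^k − u^{k+1}, u^{k+1} − u⟩_M` eliminates `N₁, N₂`, and,
because `x̄ = x + σK*y` and `ȳ = y − τKx` at the comparison point, the `K`-terms reduce to
`⟨K x_test, y⟩ − ⟨K x, y_test⟩`; what is left are exactly the two inner products of the
resolvent inequalities at `w = x` and `w = y`. The equality is polarization of the symmetric
form `⟨·,·⟩_M`.
-/

open scoped RealInnerProductSpace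

section

variable {X Y : Type*}
  [NormedAddCommGroup X] [InnerProductSpace ℝ X] [CompleteSpace X]
  [NormedAddCommGroup Y] [InnerProductSpace ℝ Y] [CompleteSpace Y]

/-- The (possibly degenerate) inner product `⟨u, u'⟩_𝐌` on `𝕌 = (X × Y)²`, where
`u = (x, y, x̄, ȳ)` and
`⟨u,u'⟩_𝐌 = (1/σ)[⟨(N₁−I)x, x'⟩ + ⟨x̄, x̄'⟩] + (1/τ)[⟨(N₂−I)y, y'⟩ + ⟨ȳ, ȳ'⟩]`. -/
noncomputable def Mbil (σ τ : ℝ) (N₁ : X →L[ℝ] X) (N₂ : Y →L[ℝ] Y)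
    (u u' : X × Y × X × Y) : ℝ :=
  (1 / σ) * (⟪N₁ u.1 - u.1, u'.1⟫ + ⟪u.2.2.1, u'.2.2.1⟫)
    + (1 / τ) * (⟪N₂ u.2.1 - u.2.1, u'.2.1⟫ + ⟪u.2.2.2, u'.2.2.2⟫)

theorem Mbil_sub_sub_eq_half {σ τ : ℝ} {N₁ : X →L[ℝ] X} {N₂ : Y →L[ℝ] Y}
    (hN₁ : IsSelfAdjoint N₁) (hN₂ : IsSelfAdjoint N₂) (a b c : X × Y × X × Y) :
    Mbil σ τ N₁ N₂ (a - b) (b - c)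
      = (1 / 2) * (Mbil σ τ N₁ N₂ (a - c) (a - c) - Mbil σ τ N₁ N₂ (b - c) (b - c)
          - Mbil σ τ N₁ N₂ (b - a) (b - a)) := by
  have h₁ : ∀ v w : X, ⟪N₁ v, w⟫ = ⟪N₁ w, v⟫ := fun v w =>
    (hN₁.isSymmetric v w).trans (real_inner_comm _ _)
  have h₂ : ∀ v w : Y, ⟪N₂ v, w⟫ = ⟪N₂ w, v⟫ := fun v w =>
    (hN₂.isSymmetric v w).trans (real_inner_comm _ _)
  simp only [Mbil, Prod.fst_sub, Prod.snd_sub, map_sub, inner_sub_left, inner_sub_right,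
    h₁, h₂, real_inner_comm]
  ring

theorem sub_le_inner_div_of_forall_le {E : Type*} [NormedAddCommGroup E] [InnerProductSpace ℝ E]
    {f : E → ℝ} {σ : ℝ} (hσ : 0 < σ) {p q : E} (hpq : ∀ w, σ * f p + ⟪q - p, w - p⟫ ≤ σ * f w)
    (w : E) : f p - f w ≤ ⟪q - p, p - w⟫ / σ := by
  have h := hpq w
  rw [← neg_sub p w, inner_neg_right] at h
  rw [le_div_iff₀ hσ]
  linarith

theorem Mbil_pdr_step_eq {K : X →L[ℝ] Y} {σ τ : ℝ} (hσ : σ ≠ 0) (hτ : τ ≠ 0)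
    {N₁ : X →L[ℝ] X} {N₂ : Y →L[ℝ] Y} {x₀ : X} {y₀ : Y} {xb₀ : X} {yb₀ : Y}
    (hxb₀ : xb₀ = x₀ + σ • (ContinuousLinearMap.adjoint K) y₀)
    (hyb₀ : yb₀ = y₀ - τ • K x₀)
    {x x' xt xb xb' : X} {y y' yt yb yb' : Y}
    (hx' : N₁ x' = (N₁ x - x) + xb - σ • (ContinuousLinearMap.adjoint K) y')
    (hy' : N₂ y' = (N₂ y - y) + yb + τ • K x')
    (hxb' : xb' = xb + xt - x') (hyb' : yb' = yb + yt - y') :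
    Mbil σ τ N₁ N₂ ((x, y, xb, yb) - (x', y', xb', yb'))
        ((x', y', xb', yb') - (x₀, y₀, xb₀, yb₀))
      = ⟪(2 : ℝ) • x' - xb - xt, xt - x₀⟫ / σ + ⟪(2 : ℝ) • y' - yb - yt, yt - y₀⟫ / τ
        + ⟪K xt, y₀⟫ - ⟪K x₀, yt⟫ := by
  simp only [Mbil, Prod.fst_sub, Prod.snd_sub, map_sub, hx', hy', hxb', hyb', hxb₀, hyb₀]
  simp only [inner_sub_left, inner_sub_right, inner_add_left, inner_add_right,
    real_inner_smul_left, real_inner_smul_right, ContinuousLinearMap.adjoint_inner_left,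
    ContinuousLinearMap.adjoint_inner_right, two_smul]
  simp only [real_inner_comm]
  field_simp
  ring

theorem stmt_1_general
    (F : X → ℝ) (G : Y → ℝ)
    (K : X →L[ℝ] Y)
    (σ τ : ℝ) (hσ : 0 < σ) (hτ : 0 < τ)
    (N₁ : X →L[ℝ] X) (N₂ : Y →L[ℝ] Y)
    (hN₁sa : IsSelfAdjoint N₁) (hN₂sa : IsSelfAdjoint N₂)
    -- the comparison point `u = (x₀, y₀, xb₀, yb₀)` with `x̄ = x + σK*y`, `ȳ = y − τKx`
    (x₀ : X) (y₀ : Y) (xb₀ : X) (yb₀ : Y)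
    (hxb₀ : xb₀ = x₀ + σ • (ContinuousLinearMap.adjoint K) y₀)
    (hyb₀ : yb₀ = y₀ - τ • K x₀)
    -- one PDR step: input `u^k = (x, y, xb, yb)`, output `u^{k+1} = (x', y', xb', yb')`,
    -- transitional variables `(xt, yt)`
    (x x' xt xb xb' : X) (y y' yt yb yb' : Y)
    (hx' : N₁ x' = (N₁ x - x) + xb - σ • (ContinuousLinearMap.adjoint K) y')
    (hy' : N₂ y' = (N₂ y - y) + yb + τ • K x')
    (hxt : ∀ w : X, σ * F xt + ⟪(2 : ℝ) • x' - xb - xt, w - xt⟫ ≤ σ * F w)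
    (hyt : ∀ w : Y, τ * G yt + ⟪(2 : ℝ) • y' - yb - yt, w - yt⟫ ≤ τ * G w)
    (hxb' : xb' = xb + xt - x')
    (hyb' : yb' = yb + yt - y') :
    (F xt + ⟪K xt, y₀⟫ - G y₀) - (F x₀ + ⟪K x₀, yt⟫ - G yt)
        ≤ Mbil σ τ N₁ N₂ ((x, y, xb, yb) - (x', y', xb', yb'))
            ((x', y', xb', yb') - (x₀, y₀, xb₀, yb₀))
      ∧ Mbil σ τ N₁ N₂ ((x, y, xb, yb) - (x', y', xb', yb'))
            ((x', y', xb', yb') - (x₀, y₀, xb₀, yb₀))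
          = (1 / 2) *
            (Mbil σ τ N₁ N₂ ((x, y, xb, yb) - (x₀, y₀, xb₀, yb₀))
                ((x, y, xb, yb) - (x₀, y₀, xb₀, yb₀))
              - Mbil σ τ N₁ N₂ ((x', y', xb', yb') - (x₀, y₀, xb₀, yb₀))
                  ((x', y', xb', yb') - (x₀, y₀, xb₀, yb₀))
              - Mbil σ τ N₁ N₂ ((x', y', xb', yb') - (x, y, xb, yb))
                  ((x', y', xb', yb') - (x, y, xb, yb))) := by
  refine ⟨?_, Mbil_sub_sub_eq_half hN₁sa hN₂sa _ _ _⟩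
  rw [Mbil_pdr_step_eq hσ.ne' hτ.ne' hxb₀ hyb₀ hx' hy' hxb' hyb']
  have hFx := sub_le_inner_div_of_forall_le hσ hxt x₀
  have hGy := sub_le_inner_div_of_forall_le hτ hyt y₀
  linarith

/-- **Proposition 2.2 (Lemma 2.2 of Bredies–Sun).** If `u = (x, y, x̄, ȳ)` with
`x̄ = x + σK*y`, `ȳ = y − τKx`, then for one PDR step `u^{k+1} = 𝒯 u^k` with transitional
variables `(x_test^{k+1}, y_test^{k+1})` one has
`ℒ(x_test^{k+1}, y) − ℒ(x, y_test^{k+1}) ≤ ⟨u^k − u^{k+1}, u^{k+1} − u⟩_𝐌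
  = ½(‖u^k − u‖²_𝐌 − ‖u^{k+1} − u‖²_𝐌 − ‖u^{k+1} − u^k‖²_𝐌)`. -/
theorem stmt_1
    (F : X → ℝ) (G : Y → ℝ)
    (hF : ConvexOn ℝ Set.univ F) (hFlsc : LowerSemicontinuous F)
    (hG : ConvexOn ℝ Set.univ G) (hGlsc : LowerSemicontinuous G)
    (K : X →L[ℝ] Y)
    (σ τ : ℝ) (hσ : 0 < σ) (hτ : 0 < τ)
    (N₁ : X →L[ℝ] X) (N₂ : Y →L[ℝ] Y)
    (hN₁sa : IsSelfAdjoint N₁) (hN₂sa : IsSelfAdjoint N₂)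
    (hN₁ : ∀ v : X, ‖v‖ ^ 2 ≤ ⟪N₁ v, v⟫)
    (hN₂ : ∀ v : Y, ‖v‖ ^ 2 ≤ ⟪N₂ v, v⟫)
    -- the comparison point `u = (x₀, y₀, xb₀, yb₀)` with `x̄ = x + σK*y`, `ȳ = y − τKx`
    (x₀ : X) (y₀ : Y) (xb₀ : X) (yb₀ : Y)
    (hxb₀ : xb₀ = x₀ + σ • (ContinuousLinearMap.adjoint K) y₀)
    (hyb₀ : yb₀ = y₀ - τ • K x₀)
    -- one PDR step: input `u^k = (x, y, xb, yb)`, output `u^{k+1} = (x', y', xb', yb')`,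
    -- transitional variables `(xt, yt)`
    (x x' xt xb xb' : X) (y y' yt yb yb' : Y)
    (hx' : N₁ x' = (N₁ x - x) + xb - σ • (ContinuousLinearMap.adjoint K) y')
    (hy' : N₂ y' = (N₂ y - y) + yb + τ • K x')
    (hxt : ∀ w : X, σ * F xt + ⟪(2 : ℝ) • x' - xb - xt, w - xt⟫ ≤ σ * F w)
    (hyt : ∀ w : Y, τ * G yt + ⟪(2 : ℝ) • y' - yb - yt, w - yt⟫ ≤ τ * G w)
    (hxb' : xb' = xb + xt - x')
    (hyb' : yb' = yb + yt - y') :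
    (F xt + ⟪K xt, y₀⟫ - G y₀) - (F x₀ + ⟪K x₀, yt⟫ - G yt)
        ≤ Mbil σ τ N₁ N₂ ((x, y, xb, yb) - (x', y', xb', yb'))
            ((x', y', xb', yb') - (x₀, y₀, xb₀, yb₀))
      ∧ Mbil σ τ N₁ N₂ ((x, y, xb, yb) - (x', y', xb', yb'))
            ((x', y', xb', yb') - (x₀, y₀, xb₀, yb₀))
          = (1 / 2) *
            (Mbil σ τ N₁ N₂ ((x, y, xb, yb) - (x₀, y₀, xb₀, yb₀))
                ((x, y, xb, yb) - (x₀, y₀, xb₀, yb₀))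
              - Mbil σ τ N₁ N₂ ((x', y', xb', yb') - (x₀, y₀, xb₀, yb₀))
                  ((x', y', xb', yb') - (x₀, y₀, xb₀, yb₀))
              - Mbil σ τ N₁ N₂ ((x', y', xb', yb') - (x, y, xb, yb))
                  ((x', y', xb', yb') - (x, y, xb, yb))) :=
  stmt_1_general F G K σ τ hσ hτ N₁ N₂ hN₁sa hN₂sa x₀ y₀ xb₀ yb₀ hxb₀ hyb₀ x x' xt xb xb' y y' yt yb
    yb' hx' hy' hxt hyt hxb' hyb'

end
end

section
/- Let u = (x,y,x̄,ȳ) with (x,y) ∈ dom F × dom G, x̄ = x + σK*y and ȳ = y − τKx. For any u^k ∈ U, let u^{k+1} = (I − I_{ϱk})u^k + I_{ϱk} T u^k be one step of the relaxed PDR (RPDR) iteration with transitional variables x_test^{k+1}, y_test^{k+1}. Then L(x_test^{k+1}, y) − L(x, y_test^{k+1}) ≤ (1/2)( ‖u^k − u‖²_{M I_{ϱk}^{-1}} − ‖u^{k+1} − u‖²_{M I_{ϱk}^{-1}} − ‖u^{k+1} − u^k‖²_{M(2I − I_{ϱk})I_{ϱk}^{-2}} ). -/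
/-!
The resolvent steps give subgradient inequalities for `F` at `x_test` and `G` at `y_test`, so
the gap is at most `(1/σ)⟪2x_t − x̄ − x_test, x_test − x⟫ + (1/τ)⟪2y_t − ȳ − y_test, y_test − y⟫`
plus coupling terms in `K`. By the linear equations defining `(x_t, y_t)` and the relations
`x̄ = x + σK*y`, `ȳ = y − τKx` at the comparison point, the coupling terms cancel and this bound
equals `−⟨Tuᵏ − u, Tuᵏ − uᵏ⟩_M`. The relaxed step is `uᵏ⁺¹ = uᵏ + I_ϱ(Tuᵏ − uᵏ)`, and the
blockwise identity `(1/ρ)‖w‖² − (1/ρ)‖w + ρd‖² − ((2−ρ)/ρ²)‖ρd‖² = −2⟨w + d, d⟩` with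
`w = uᵏ − u`, `d = Tuᵏ − uᵏ` turns `−⟨Tuᵏ − u, Tuᵏ − uᵏ⟩_M` into the right-hand side.
-/

open scoped RealInnerProductSpace

section Hilbert

variable {E : Type*} [NormedAddCommGroup E] [InnerProductSpace ℝ E]

lemma sub_le_inner_of_forall_mul_add_inner_le {f : E → ℝ} {c : ℝ} {a g : E} (hc : 0 < c)
    (h : ∀ w, c * f a + ⟪g, w - a⟫ ≤ c * f w) (b : E) :
    f a - f b ≤ (1 / c) * ⟪g, a - b⟫ := by
  have hb := h b
  rw [← neg_sub a b, inner_neg_right] at hb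
  rw [one_div, inv_mul_eq_div, le_div_iff₀ hc]
  linarith

lemma inner_relax_identity {A : E →ₗ[ℝ] E} (hA : A.IsSymmetric) {ρ : ℝ} (hρ : ρ ≠ 0)
    (w d : E) :
    (1 / ρ) * ⟪A w, w⟫ - (1 / ρ) * ⟪A (w + ρ • d), w + ρ • d⟫
      - ((2 - ρ) / ρ ^ 2) * ⟪A (ρ • d), ρ • d⟫ = -2 * ⟪A (w + d), d⟫ := by
  have hsym : ⟪A d, w⟫ = ⟪A w, d⟫ := by rw [hA d w, real_inner_comm]
  simp only [map_add, map_smul, inner_add_left, inner_add_right, real_inner_smul_left,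
    real_inner_smul_right, hsym]
  field_simp
  ring

lemma inner_sub_relax_identity {A : E →ₗ[ℝ] E} (hA : A.IsSymmetric) {ρ : ℝ} (hρ : ρ ≠ 0)
    (w d : E) :
    (1 / ρ) * ⟪A w - w, w⟫ - (1 / ρ) * ⟪A (w + ρ • d) - (w + ρ • d), w + ρ • d⟫
      - ((2 - ρ) / ρ ^ 2) * ⟪A (ρ • d) - ρ • d, ρ • d⟫ = -2 * ⟪A (w + d) - (w + d), d⟫ := by
  simpa only [LinearMap.sub_apply, Module.End.one_apply] using
    inner_relax_identity (hA.sub .one) hρ w d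

lemma norm_sq_relax_identity {ρ : ℝ} (hρ : ρ ≠ 0) (w d : E) :
    (1 / ρ) * ‖w‖ ^ 2 - (1 / ρ) * ‖w + ρ • d‖ ^ 2 - ((2 - ρ) / ρ ^ 2) * ‖ρ • d‖ ^ 2
      = -2 * ⟪w + d, d⟫ := by
  simpa only [Module.End.one_apply, real_inner_self_eq_norm_sq] using
    inner_relax_identity (A := (1 : E →ₗ[ℝ] E)) .one hρ w d

end Hilbert

section

variable {X Y : Type*}
  [NormedAddCommGroup X] [InnerProductSpace ℝ X] [CompleteSpace X]
  [NormedAddCommGroup Y] [InnerProductSpace ℝ Y] [CompleteSpace Y]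

/-- The weighted quadratic form `‖u‖²_{𝐌 W}` on `𝕌 = (X × Y)²` for a block-diagonal
weight `W = Diag[a I, b I, c I, d I]`, where
`𝐌 = Diag[(N₁−I)/σ, (N₂−I)/τ, I/σ, I/τ]` and `u = (x, y, x̄, ȳ)`. -/
noncomputable def MformW (σ τ a b c d : ℝ) (N₁ : X →L[ℝ] X) (N₂ : Y →L[ℝ] Y)
    (u : X × Y × X × Y) : ℝ :=
  a * (1 / σ) * ⟪N₁ u.1 - u.1, u.1⟫ + b * (1 / τ) * ⟪N₂ u.2.1 - u.2.1, u.2.1⟫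
    + c * (1 / σ) * ‖u.2.2.1‖ ^ 2 + d * (1 / τ) * ‖u.2.2.2‖ ^ 2

end

section PDR

variable {X Y : Type*}
  [NormedAddCommGroup X] [InnerProductSpace ℝ X]
  [NormedAddCommGroup Y] [InnerProductSpace ℝ Y]

/-- The semi-inner product `⟨u, u'⟩_M`, whose quadratic form is `MformW σ τ 1 1 1 1`. -/
noncomputable def innerM (σ τ : ℝ) (N₁ : X →L[ℝ] X) (N₂ : Y →L[ℝ] Y)
    (u u' : X × Y × X × Y) : ℝ :=
  (1 / σ) * (⟪N₁ u.1 - u.1, u'.1⟫ + ⟪u.2.2.1, u'.2.2.1⟫)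
    + (1 / τ) * (⟪N₂ u.2.1 - u.2.1, u'.2.1⟫ + ⟪u.2.2.2, u'.2.2.2⟫)

/-- The relaxation weight `I_ϱ = Diag[ρ I, ρ I, ρₓ I, ρ_y I]`. -/
def relaxDiag (ρ ρx ρy : ℝ) (u : X × Y × X × Y) : X × Y × X × Y :=
  (ρ • u.1, ρ • u.2.1, ρx • u.2.2.1, ρy • u.2.2.2)

lemma MformW_relax_identity {N₁ : X →L[ℝ] X} {N₂ : Y →L[ℝ] Y}
    (hN₁ : (N₁ : X →ₗ[ℝ] X).IsSymmetric) (hN₂ : (N₂ : Y →ₗ[ℝ] Y).IsSymmetric) (σ τ : ℝ)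
    {ρ ρx ρy : ℝ} (hρ : ρ ≠ 0) (hρx : ρx ≠ 0) (hρy : ρy ≠ 0) (w d : X × Y × X × Y) :
    (1 / 2) *
        (MformW σ τ (1 / ρ) (1 / ρ) (1 / ρx) (1 / ρy) N₁ N₂ w
          - MformW σ τ (1 / ρ) (1 / ρ) (1 / ρx) (1 / ρy) N₁ N₂ (w + relaxDiag ρ ρx ρy d)
          - MformW σ τ ((2 - ρ) / ρ ^ 2) ((2 - ρ) / ρ ^ 2) ((2 - ρx) / ρx ^ 2)
              ((2 - ρy) / ρy ^ 2) N₁ N₂ (relaxDiag ρ ρx ρy d))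
      = -innerM σ τ N₁ N₂ (w + d) d := by
  obtain ⟨w₁, w₂, w₃, w₄⟩ := w
  obtain ⟨d₁, d₂, d₃, d₄⟩ := d
  simp only [MformW, innerM, relaxDiag, Prod.mk_add_mk]
  linear_combination (1 / (2 * σ)) * inner_sub_relax_identity hN₁ hρ w₁ d₁
    + (1 / (2 * τ)) * inner_sub_relax_identity hN₂ hρ w₂ d₂
    + (1 / (2 * σ)) * norm_sq_relax_identity hρx w₃ d₃
    + (1 / (2 * τ)) * norm_sq_relax_identity hρy w₄ d₄

lemma MformW_relax_step {N₁ : X →L[ℝ] X} {N₂ : Y →L[ℝ] Y}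
    (hN₁ : (N₁ : X →ₗ[ℝ] X).IsSymmetric) (hN₂ : (N₂ : Y →ₗ[ℝ] Y).IsSymmetric) (σ τ : ℝ)
    {ρ ρx ρy : ℝ} (hρ : ρ ≠ 0) (hρx : ρx ≠ 0) (hρy : ρy ≠ 0) {u₀ u v u' : X × Y × X × Y}
    (hu' : u' = u + relaxDiag ρ ρx ρy (v - u)) :
    (1 / 2) *
        (MformW σ τ (1 / ρ) (1 / ρ) (1 / ρx) (1 / ρy) N₁ N₂ (u - u₀)
          - MformW σ τ (1 / ρ) (1 / ρ) (1 / ρx) (1 / ρy) N₁ N₂ (u' - u₀)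
          - MformW σ τ ((2 - ρ) / ρ ^ 2) ((2 - ρ) / ρ ^ 2) ((2 - ρx) / ρx ^ 2)
              ((2 - ρy) / ρy ^ 2) N₁ N₂ (u' - u))
      = -innerM σ τ N₁ N₂ (v - u₀) (v - u) := by
  rw [hu', add_sub_cancel_left, add_sub_right_comm, ← sub_add_sub_cancel' u u₀ v]
  exact MformW_relax_identity hN₁ hN₂ σ τ hρ hρx hρy (u - u₀) (v - u)

end PDR

section

variable {X Y : Type*}
  [NormedAddCommGroup X] [InnerProductSpace ℝ X] [CompleteSpace X]
  [NormedAddCommGroup Y] [InnerProductSpace ℝ Y] [CompleteSpace Y]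

lemma pdr_inner_identity (K : X →L[ℝ] Y) {σ τ : ℝ} (hσ : σ ≠ 0) (hτ : τ ≠ 0)
    {N₁ : X →L[ℝ] X} {N₂ : Y →L[ℝ] Y} (hN₁ : IsSelfAdjoint N₁) (hN₂ : IsSelfAdjoint N₂)
    {x₀ xb₀ x xt xb : X} {y₀ yb₀ y yt yb : Y}
    (hxb₀ : xb₀ = x₀ + σ • (ContinuousLinearMap.adjoint K) y₀)
    (hyb₀ : yb₀ = y₀ - τ • K x₀)
    (hxt : N₁ xt = (N₁ x - x) + xb - σ • (ContinuousLinearMap.adjoint K) yt)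
    (hyt : N₂ yt = (N₂ y - y) + yb + τ • K xt) (xtst : X) (ytst : Y) :
    (1 / σ) * ⟪(2 : ℝ) • xt - xb - xtst, xtst - x₀⟫
        + (1 / τ) * ⟪(2 : ℝ) • yt - yb - ytst, ytst - y₀⟫ + ⟪K xtst, y₀⟫ - ⟪K x₀, ytst⟫
      = -innerM σ τ N₁ N₂ ((xt, yt, xb + (xtst - xt), yb + (ytst - yt)) - (x₀, y₀, xb₀, yb₀))
          ((xt, yt, xb + (xtst - xt), yb + (ytst - yt)) - (x, y, xb, yb)) := by
  have rx : ⟪N₁ (xt - x₀) - (xt - x₀), xt - x⟫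
      = ⟪xt - x₀, xb - xt - σ • (ContinuousLinearMap.adjoint K) yt⟫ := by
    rw [inner_sub_left, hN₁.isSymmetric.apply_clm, ← inner_sub_right, map_sub, hxt]
    congr 1
    module
  have ry : ⟪N₂ (yt - y₀) - (yt - y₀), yt - y⟫ = ⟪yt - y₀, yb - yt + τ • K xt⟫ := by
    rw [inner_sub_left, hN₂.isSymmetric.apply_clm, ← inner_sub_right, map_sub, hyt]
    congr 1
    module
  simp only [innerM, Prod.mk_sub_mk, add_sub_cancel_left, rx, ry]
  subst hxb₀ hyb₀
  simp only [inner_sub_left, inner_sub_right, inner_add_left, inner_add_right,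
    real_inner_smul_right, ContinuousLinearMap.adjoint_inner_right, real_inner_comm]
  field_simp
  ring

theorem stmt_2_general
    (F : X → ℝ) (G : Y → ℝ)
    (K : X →L[ℝ] Y)
    (σ τ : ℝ) (hσ : 0 < σ) (hτ : 0 < τ)
    (N₁ : X →L[ℝ] X) (N₂ : Y →L[ℝ] Y)
    (hN₁sa : IsSelfAdjoint N₁) (hN₂sa : IsSelfAdjoint N₂)
    -- relaxation parameters
    (ρ ρx ρy : ℝ)
    (hρ : ρ ∈ Set.Ioo (0 : ℝ) 2) (hρx : ρx ∈ Set.Ioo (0 : ℝ) 2)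
    (hρy : ρy ∈ Set.Ioo (0 : ℝ) 2)
    -- the comparison point `u = (x₀, y₀, xb₀, yb₀)` with `x̄ = x + σK*y`, `ȳ = y − τKx`
    (x₀ : X) (y₀ : Y) (xb₀ : X) (yb₀ : Y)
    (hxb₀ : xb₀ = x₀ + σ • (ContinuousLinearMap.adjoint K) y₀)
    (hyb₀ : yb₀ = y₀ - τ • K x₀)
    -- input `u^k = (x, y, xb, yb)`; `(xt, yt)` are the first two components of `𝒯 u^k`,
    -- `(xtst, ytst)` the transitional variables, and `(x', y', xb', yb')` the RPDR output
    (x x' xt xtst xb xb' : X) (y y' yt ytst yb yb' : Y)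
    (hxt : N₁ xt = (N₁ x - x) + xb - σ • (ContinuousLinearMap.adjoint K) yt)
    (hyt : N₂ yt = (N₂ y - y) + yb + τ • K xt)
    (hxtst : ∀ w : X, σ * F xtst + ⟪(2 : ℝ) • xt - xb - xtst, w - xtst⟫ ≤ σ * F w)
    (hytst : ∀ w : Y, τ * G ytst + ⟪(2 : ℝ) • yt - yb - ytst, w - ytst⟫ ≤ τ * G w)
    (hx' : x' = (1 - ρ) • x + ρ • xt)
    (hy' : y' = (1 - ρ) • y + ρ • yt)
    (hxb' : xb' = xb + ρx • (xtst - xt))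
    (hyb' : yb' = yb + ρy • (ytst - yt)) :
    (F xtst + ⟪K xtst, y₀⟫ - G y₀) - (F x₀ + ⟪K x₀, ytst⟫ - G ytst)
      ≤ (1 / 2) *
        (MformW σ τ (1 / ρ) (1 / ρ) (1 / ρx) (1 / ρy) N₁ N₂
            ((x, y, xb, yb) - (x₀, y₀, xb₀, yb₀))
          - MformW σ τ (1 / ρ) (1 / ρ) (1 / ρx) (1 / ρy) N₁ N₂
              ((x', y', xb', yb') - (x₀, y₀, xb₀, yb₀))
          - MformW σ τ ((2 - ρ) / ρ ^ 2) ((2 - ρ) / ρ ^ 2) ((2 - ρx) / ρx ^ 2)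
              ((2 - ρy) / ρy ^ 2) N₁ N₂
              ((x', y', xb', yb') - (x, y, xb, yb))) := by
  have hFx := sub_le_inner_of_forall_mul_add_inner_le hσ hxtst x₀
  have hGy := sub_le_inner_of_forall_mul_add_inner_le hτ hytst y₀
  have hPDR := pdr_inner_identity K hσ.ne' hτ.ne' hN₁sa hN₂sa hxb₀ hyb₀ hxt hyt xtst ytst
  have hstep : (x', y', xb', yb') = (x, y, xb, yb)
      + relaxDiag ρ ρx ρy ((xt, yt, xb + (xtst - xt), yb + (ytst - yt)) - (x, y, xb, yb)) := by
    simp only [hx', hy', hxb', hyb', relaxDiag, Prod.mk_sub_mk, Prod.mk_add_mk,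
      add_sub_cancel_left, Prod.mk.injEq, and_true]
    exact ⟨by module, by module⟩
  have hrelax := MformW_relax_step hN₁sa.isSymmetric hN₂sa.isSymmetric σ τ hρ.1.ne' hρx.1.ne'
    hρy.1.ne' hstep (u₀ := (x₀, y₀, xb₀, yb₀))
  linarith

/-- **Proposition 2.3.** If `u = (x, y, x̄, ȳ)` with `(x,y) ∈ dom F × dom G`,
`x̄ = x + σK*y`, `ȳ = y − τKx`, then one step
`u^{k+1} = (I − I_ϱ)u^k + I_ϱ 𝒯u^k` of the relaxed preconditioned Douglas–Rachford
iteration (RPDR) with transitional variables `(x_test^{k+1}, y_test^{k+1})` satisfies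
`ℒ(x_test^{k+1}, y) − ℒ(x, y_test^{k+1})
  ≤ ½( ‖u^k − u‖²_{𝐌 I_ϱ⁻¹} − ‖u^{k+1} − u‖²_{𝐌 I_ϱ⁻¹}
       − ‖u^{k+1} − u^k‖²_{𝐌(2I − I_ϱ)I_ϱ⁻²} )`. -/
theorem stmt_2
    (F : X → ℝ) (G : Y → ℝ)
    (hF : ConvexOn ℝ Set.univ F) (hFlsc : LowerSemicontinuous F)
    (hG : ConvexOn ℝ Set.univ G) (hGlsc : LowerSemicontinuous G)
    (K : X →L[ℝ] Y)
    (σ τ : ℝ) (hσ : 0 < σ) (hτ : 0 < τ)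
    (N₁ : X →L[ℝ] X) (N₂ : Y →L[ℝ] Y)
    (hN₁sa : IsSelfAdjoint N₁) (hN₂sa : IsSelfAdjoint N₂)
    (hN₁ : ∀ v : X, ‖v‖ ^ 2 ≤ ⟪N₁ v, v⟫)
    (hN₂ : ∀ v : Y, ‖v‖ ^ 2 ≤ ⟪N₂ v, v⟫)
    -- relaxation parameters
    (ρ ρx ρy : ℝ)
    (hρ : ρ ∈ Set.Ioo (0 : ℝ) 2) (hρx : ρx ∈ Set.Ioo (0 : ℝ) 2)
    (hρy : ρy ∈ Set.Ioo (0 : ℝ) 2)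
    -- the comparison point `u = (x₀, y₀, xb₀, yb₀)` with `x̄ = x + σK*y`, `ȳ = y − τKx`
    (x₀ : X) (y₀ : Y) (xb₀ : X) (yb₀ : Y)
    (hxb₀ : xb₀ = x₀ + σ • (ContinuousLinearMap.adjoint K) y₀)
    (hyb₀ : yb₀ = y₀ - τ • K x₀)
    -- input `u^k = (x, y, xb, yb)`; `(xt, yt)` are the first two components of `𝒯 u^k`,
    -- `(xtst, ytst)` the transitional variables, and `(x', y', xb', yb')` the RPDR output
    (x x' xt xtst xb xb' : X) (y y' yt ytst yb yb' : Y)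
    (hxt : N₁ xt = (N₁ x - x) + xb - σ • (ContinuousLinearMap.adjoint K) yt)
    (hyt : N₂ yt = (N₂ y - y) + yb + τ • K xt)
    (hxtst : ∀ w : X, σ * F xtst + ⟪(2 : ℝ) • xt - xb - xtst, w - xtst⟫ ≤ σ * F w)
    (hytst : ∀ w : Y, τ * G ytst + ⟪(2 : ℝ) • yt - yb - ytst, w - ytst⟫ ≤ τ * G w)
    (hx' : x' = (1 - ρ) • x + ρ • xt)
    (hy' : y' = (1 - ρ) • y + ρ • yt)
    (hxb' : xb' = xb + ρx • (xtst - xt))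
    (hyb' : yb' = yb + ρy • (ytst - yt)) :
    (F xtst + ⟪K xtst, y₀⟫ - G y₀) - (F x₀ + ⟪K x₀, ytst⟫ - G ytst)
      ≤ (1 / 2) *
        (MformW σ τ (1 / ρ) (1 / ρ) (1 / ρx) (1 / ρy) N₁ N₂
            ((x, y, xb, yb) - (x₀, y₀, xb₀, yb₀))
          - MformW σ τ (1 / ρ) (1 / ρ) (1 / ρx) (1 / ρy) N₁ N₂
              ((x', y', xb', yb') - (x₀, y₀, xb₀, yb₀))
          - MformW σ τ ((2 - ρ) / ρ ^ 2) ((2 - ρ) / ρ ^ 2) ((2 - ρx) / ρx ^ 2)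
              ((2 - ρy) / ρy ^ 2) N₁ N₂
              ((x', y', xb', yb') - (x, y, xb, yb))) :=
  stmt_2_general F G K σ τ hσ hτ N₁ N₂ hN₁sa hN₂sa ρ ρx ρy hρ hρx hρy x₀ y₀ xb₀ yb₀ hxb₀ hyb₀ x x'
    xt xtst xb xb' y y' yt ytst yb yb' hxt hyt hxtst hytst hx' hy' hxb' hyb'

end
end

section
/- A point u* = (x*, y*, x̄*, ȳ*) ∈ U is a fixed point of the RPDR iteration (equivalently of the PDR operator T) if and only if (x*, y*) is a saddle point of the problem min_x max_y L(x,y) and x* + σK*y* = x̄*, y* − τKx* = ȳ*. -/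
open scoped RealInnerProductSpace

/-- **Lemma 2.4 (i).** A point `u* = (x*, y*, x̄*, ȳ*)` is a fixed point of the RPDR
iteration `u ↦ (I − I_ϱ)u + I_ϱ 𝒯u` (equivalently, of the PDR operator `𝒯`) if and only
if `(x*, y*)` is a saddle point of `min_x max_y ℒ(x,y)` and
`x* + σK*y* = x̄*`, `y* − τKx* = ȳ*`. -/
theorem stmt_3
    {X Y : Type*}
    [NormedAddCommGroup X] [InnerProductSpace ℝ X] [CompleteSpace X]
    [NormedAddCommGroup Y] [InnerProductSpace ℝ Y] [CompleteSpace Y]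
    (F : X → ℝ) (G : Y → ℝ)
    (hF : ConvexOn ℝ Set.univ F) (hFlsc : LowerSemicontinuous F)
    (hG : ConvexOn ℝ Set.univ G) (hGlsc : LowerSemicontinuous G)
    (K : X →L[ℝ] Y)
    (σ τ : ℝ) (hσ : 0 < σ) (hτ : 0 < τ)
    (N₁ : X →L[ℝ] X) (N₂ : Y →L[ℝ] Y)
    (hN₁sa : IsSelfAdjoint N₁) (hN₂sa : IsSelfAdjoint N₂)
    (hN₁ : ∀ v : X, ‖v‖ ^ 2 ≤ ⟪N₁ v, v⟫)
    (hN₂ : ∀ v : Y, ‖v‖ ^ 2 ≤ ⟪N₂ v, v⟫)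
    (ρ ρx ρy : ℝ)
    (hρ : ρ ∈ Set.Ioo (0 : ℝ) 2) (hρx : ρx ∈ Set.Ioo (0 : ℝ) 2)
    (hρy : ρy ∈ Set.Ioo (0 : ℝ) 2)
    (xs : X) (ys : Y) (xbs : X) (ybs : Y) :
    -- `u*` is a fixed point of the RPDR step: there are `(x⁺, y⁺)` and transitional
    -- variables `(xtst, ytst)` performing one PDR step from `u*` such that the relaxed
    -- update leaves `u*` unchanged
    (∃ (xp xtst : X) (yp ytst : Y),
        N₁ xp = (N₁ xs - xs) + xbs - σ • (ContinuousLinearMap.adjoint K) yp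
        ∧ N₂ yp = (N₂ ys - ys) + ybs + τ • K xp
        ∧ (∀ w : X, σ * F xtst + ⟪(2 : ℝ) • xp - xbs - xtst, w - xtst⟫ ≤ σ * F w)
        ∧ (∀ w : Y, τ * G ytst + ⟪(2 : ℝ) • yp - ybs - ytst, w - ytst⟫ ≤ τ * G w)
        ∧ xs = (1 - ρ) • xs + ρ • xp
        ∧ ys = (1 - ρ) • ys + ρ • yp
        ∧ xbs = xbs + ρx • (xtst - xp)
        ∧ ybs = ybs + ρy • (ytst - yp))
    ↔ ((∀ (x : X) (y : Y),
          (F xs + ⟪K xs, y⟫ - G y) ≤ (F xs + ⟪K xs, ys⟫ - G ys)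
          ∧ (F xs + ⟪K xs, ys⟫ - G ys) ≤ (F x + ⟪K x, ys⟫ - G ys))
        ∧ xs + σ • (ContinuousLinearMap.adjoint K) ys = xbs
        ∧ ys - τ • K xs = ybs) := by
  constructor
  · rintro ⟨xp, xtst, yp, ytst, hNx, hNy, hFsub, hGsub, hx, hy, hxb, hyb⟩
    -- relaxation equalities force xp = xs, yp = ys, xtst = xp, ytst = yp
    have hxp : xp = xs := by
      apply smul_right_injective X (ne_of_gt hρ.1)
      linear_combination (norm := module) -hx
    have hyp : yp = ys := by
      apply smul_right_injective Y (ne_of_gt hρ.1)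
      linear_combination (norm := module) -hy
    have hxt : xtst = xs := by
      have h1 : ρx • (xtst - xp) = 0 := by
        have := hxb.symm
        rwa [add_eq_left] at this
      have h2 : xtst - xp = 0 := by
        rcases smul_eq_zero.mp h1 with h | h
        · exact absurd h (ne_of_gt hρx.1)
        · exact h
      rw [← hxp, sub_eq_zero.mp h2]
    have hyt : ytst = ys := by
      have h1 : ρy • (ytst - yp) = 0 := by
        have := hyb.symm
        rwa [add_eq_left] at this
      have h2 : ytst - yp = 0 := by
        rcases smul_eq_zero.mp h1 with h | h
        · exact absurd h (ne_of_gt hρy.1)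
        · exact h
      rw [← hyp, sub_eq_zero.mp h2]
    rw [hxp] at hNx hNy hFsub
    rw [hyp] at hNx hNy hGsub
    rw [hxt] at hFsub
    rw [hyt] at hGsub
    have hXB : xs + σ • (ContinuousLinearMap.adjoint K) ys = xbs := by
      linear_combination (norm := module) hNx
    have hYB : ys - τ • K xs = ybs := by
      linear_combination (norm := module) hNy
    refine ⟨?_, hXB, hYB⟩
    have hAx : (2 : ℝ) • xs - xbs - xs = -(σ • (ContinuousLinearMap.adjoint K) ys) := by
      rw [← hXB]; module
    have hAy : (2 : ℝ) • ys - ybs - ys = τ • K xs := by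
      rw [← hYB]; module
    intro x y
    constructor
    · have h := hGsub y
      rw [hAy, real_inner_smul_left, inner_sub_right] at h
      have h2 : G ys + (⟪K xs, y⟫ - ⟪K xs, ys⟫) ≤ G y := by
        have hmul : τ * (G ys + (⟪K xs, y⟫ - ⟪K xs, ys⟫)) ≤ τ * G y := by
          nlinarith [h]
        exact le_of_mul_le_mul_left hmul hτ
      linarith
    · have h := hFsub x
      rw [hAx, inner_neg_left, real_inner_smul_left, inner_sub_right,
        ContinuousLinearMap.adjoint_inner_left, ContinuousLinearMap.adjoint_inner_left] at h
      rw [real_inner_comm (K x) ys, real_inner_comm (K xs) ys] at h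
      have h2 : F xs + (⟪K xs, ys⟫ - ⟪K x, ys⟫) ≤ F x := by
        have hmul : σ * (F xs + (⟪K xs, ys⟫ - ⟪K x, ys⟫)) ≤ σ * F x := by
          nlinarith [h]
        exact le_of_mul_le_mul_left hmul hσ
      linarith
  · rintro ⟨hsaddle, hXB, hYB⟩
    refine ⟨xs, xs, ys, ys, ?_, ?_, ?_, ?_, ?_, ?_, ?_, ?_⟩
    · rw [← hXB]; module
    · rw [← hYB]; module
    · intro w
      have hAx : (2 : ℝ) • xs - xbs - xs = -(σ • (ContinuousLinearMap.adjoint K) ys) := by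
        rw [← hXB]; module
      rw [hAx, inner_neg_left, real_inner_smul_left, inner_sub_right,
        ContinuousLinearMap.adjoint_inner_left, ContinuousLinearMap.adjoint_inner_left]
      rw [real_inner_comm (K w) ys, real_inner_comm (K xs) ys]
      have h := (hsaddle w ys).2
      nlinarith [h]
    · intro w
      have hAy : (2 : ℝ) • ys - ybs - ys = τ • K xs := by
        rw [← hYB]; module
      rw [hAy, real_inner_smul_left, inner_sub_right]
      have h := (hsaddle xs w).1
      nlinarith [h]
    · module
    · module
    · rw [sub_self, smul_zero, add_zero]
    · rw [sub_self, smul_zero, add_zero]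
end

section
/- In the quadratic case F(x) = ⟨(1/2)Qx − f, x⟩, a point u* = (x*, y*, ȳ*) is a fixed point of the PDRQ operator T_Q if and only if (x*, y*) is a saddle point of min_x max_y L(x,y) and Qx* + K*y* = f, y* − τKx* = ȳ*. -/
open scoped RealInnerProductSpace

/-- **Lemma 2.6 (i).** In the quadratic case `F(x) = ⟨(1/2)Qx − f, x⟩`, a point
`u* = (x*, y*, ȳ*)` is a fixed point of the PDRQ operator `𝒯_Q` if and only if
`(x*, y*)` is a saddle point of `min_x max_y ℒ(x,y)` and
`Qx* + K*y* = f`, `y* − τKx* = ȳ*`. -/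
theorem stmt_6
    {X Y : Type*}
    [NormedAddCommGroup X] [InnerProductSpace ℝ X] [CompleteSpace X]
    [NormedAddCommGroup Y] [InnerProductSpace ℝ Y] [CompleteSpace Y]
    (G : Y → ℝ) (hG : ConvexOn ℝ Set.univ G) (hGlsc : LowerSemicontinuous G)
    (K : X →L[ℝ] Y)
    (Q : X →L[ℝ] X) (hQsa : IsSelfAdjoint Q) (hQpos : ∀ v : X, 0 ≤ ⟪Q v, v⟫)
    (f : X)
    (σ τ : ℝ) (hσ : 0 < σ) (hτ : 0 < τ)
    (N₁ : X →L[ℝ] X) (N₂ : Y →L[ℝ] Y)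
    (hN₁sa : IsSelfAdjoint N₁) (hN₂sa : IsSelfAdjoint N₂)
    (hN₁ : ∀ v : X, 0 ≤ ⟪N₁ v, v⟫)
    (hN₂ : ∀ v : Y, ‖v‖ ^ 2 ≤ ⟪N₂ v, v⟫)
    (xs : X) (ys ybs : Y) :
    -- `𝒯_Q u* = u*`: one PDRQ step from `u* = (xs, ys, ybs)` returns `u*`
    (∃ ytst : Y,
        N₁ xs + σ • Q xs = N₁ xs - σ • ((ContinuousLinearMap.adjoint K) ys - f)
        ∧ N₂ ys = (N₂ ys - ys) + ybs + τ • K xs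
        ∧ (∀ w : Y, τ * G ytst + ⟪(2 : ℝ) • ys - ybs - ytst, w - ytst⟫ ≤ τ * G w)
        ∧ ybs = ybs + ytst - ys)
    ↔ ((∀ (x : X) (y : Y),
          (⟪(1 / 2 : ℝ) • Q xs - f, xs⟫ + ⟪K xs, y⟫ - G y)
              ≤ (⟪(1 / 2 : ℝ) • Q xs - f, xs⟫ + ⟪K xs, ys⟫ - G ys)
          ∧ (⟪(1 / 2 : ℝ) • Q xs - f, xs⟫ + ⟪K xs, ys⟫ - G ys)
              ≤ (⟪(1 / 2 : ℝ) • Q x - f, x⟫ + ⟪K x, ys⟫ - G ys))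
        ∧ Q xs + (ContinuousLinearMap.adjoint K) ys = f
        ∧ ys - τ • K xs = ybs) := by
  have hsym : ∀ a b : X, ⟪Q a, b⟫ = ⟪a, Q b⟫ := fun a b =>
    (ContinuousLinearMap.isSelfAdjoint_iff_isSymmetric.mp hQsa) a b
  constructor
  · rintro ⟨ytst, h1, h2, h3, h4⟩
    -- from h1
    have hQeq : Q xs + (ContinuousLinearMap.adjoint K) ys = f := by
      have h1' : σ • (Q xs + ((ContinuousLinearMap.adjoint K) ys - f)) = 0 := by
        linear_combination (norm := module) h1
      have := (smul_eq_zero.mp h1').resolve_left (ne_of_gt hσ)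
      linear_combination (norm := module) this
    have hyb : ys - τ • K xs = ybs := by
      linear_combination (norm := module) h2
    have hyt : ytst = ys := by
      linear_combination (norm := module) -h4
    rw [hyt] at h3
    -- first saddle inequality ingredient
    have hG1 : ∀ y : Y, ⟪K xs, y⟫ - G y ≤ ⟪K xs, ys⟫ - G ys := by
      intro y
      have h := h3 y
      have hv : (2 : ℝ) • ys - ybs - ys = τ • K xs := by
        linear_combination (norm := module) hyb
      rw [hv, real_inner_smul_left] at h
      have hin : ⟪K xs, y - ys⟫ = ⟪K xs, y⟫ - ⟪K xs, ys⟫ := inner_sub_right _ _ _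
      rw [hin] at h
      nlinarith [h, hτ]
    refine ⟨fun x y => ⟨?_, ?_⟩, hQeq, hyb⟩
    · have := hG1 y; linarith
    · -- quadratic convexity
      have hpos := hQpos (x - xs)
      have hf : f = Q xs + (ContinuousLinearMap.adjoint K) ys := hQeq.symm
      have eL : ⟪(1 / 2 : ℝ) • Q xs - f, xs⟫ + ⟪K xs, ys⟫ =
          -(1 / 2 : ℝ) * ⟪Q xs, xs⟫ := by
        rw [hf]
        simp only [inner_sub_left, inner_add_left, real_inner_smul_left,
          ContinuousLinearMap.adjoint_inner_left]
        rw [real_inner_comm ys (K xs)]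
        ring
      have eR : ⟪(1 / 2 : ℝ) • Q x - f, x⟫ + ⟪K x, ys⟫ =
          (1 / 2 : ℝ) * ⟪Q x, x⟫ - ⟪Q xs, x⟫ := by
        rw [hf]
        simp only [inner_sub_left, inner_add_left, real_inner_smul_left,
          ContinuousLinearMap.adjoint_inner_left]
        rw [real_inner_comm ys (K x)]
        ring
      have hexp : ⟪Q (x - xs), x - xs⟫ =
          ⟪Q x, x⟫ - 2 * ⟪Q xs, x⟫ + ⟪Q xs, xs⟫ := by
        rw [map_sub, inner_sub_left, inner_sub_right, inner_sub_right]
        rw [hsym x xs, real_inner_comm x (Q xs)]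
        ring
      rw [hexp] at hpos
      linarith [eL, eR, hpos]
  · rintro ⟨hsad, hQeq, hyb⟩
    refine ⟨ys, ?_, ?_, ?_, ?_⟩
    · have : Q xs = -((ContinuousLinearMap.adjoint K) ys - f) := by
        linear_combination (norm := module) hQeq
      rw [this]; linear_combination (norm := module) (rfl : (N₁ xs : X) = N₁ xs)
    · linear_combination (norm := module) hyb
    · intro w
      have hv : (2 : ℝ) • ys - ybs - ys = τ • K xs := by
        linear_combination (norm := module) hyb
      rw [hv, real_inner_smul_left, inner_sub_right]
      have := (hsad xs w).1
      nlinarith [hτ]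
    · abel
end

section
/- Let (u^k) be generated by the deterministic RPDR iteration with nondecreasing relaxation parameters in [ρ_l, ρ_u] ⊂ (0,2), and let z_test^k = (x_test^k, y_test^k) be its transitional variables. Let B = B₁ × B₂ ⊂ dom F × dom G be a bounded set containing a saddle point of L. Then the ergodic averages z_{test,K} = (1/(K+1)) Σ_{k=0}^K z_test^k satisfy sup_{z∈B} H(z_{test,K}, z) ≤ (1/(2(K+1)ρ_l)) · sup_{(x,y)∈B} ‖u^0 − u‖²_M, where for each (x,y) ∈ B the comparison point is u = (x, y, x + σK*y, y − τKx); in particular the restricted primal–dual gap decays at rate O(1/K). -/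
/-!
For `ẑ = (x̂, ŷ) ∈ B` put `û = (x̂, ŷ, x̂ + σK*ŷ, ŷ − τKx̂)`. The optimality conditions of the two
proximal steps and the linear equations defining `T u` combine into the basic estimate
`H(z_test, ẑ) ≤ ⟨u − T u, T u − û⟩_M`. Relaxing with factors in `(0, 2]` turns its right-hand side,
block by block, into at most `(‖u − û‖²_M − ‖u⁺ − û‖²_M) / (2ρ)`. Since the factors are
nondecreasing these weighted differences telescope to at most `‖u⁰ − û‖²_M / ρ_l`, and as
`z ↦ H(z, ẑ)` is convex, Jensen's inequality passes the bound on the summed gaps to the gap of the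
ergodic average.
-/

open scoped RealInnerProductSpace

section

variable {X Y : Type*}
  [NormedAddCommGroup X] [InnerProductSpace ℝ X] [CompleteSpace X]
  [NormedAddCommGroup Y] [InnerProductSpace ℝ Y] [CompleteSpace Y]

/-- The quadratic form `‖u‖²_𝐌` on `𝕌 = (X × Y)²`, where
`𝐌 = Diag[(N₁−I)/σ, (N₂−I)/τ, I/σ, I/τ]` and `u = (x, y, x̄, ȳ)`. -/
noncomputable def MnormSq (σ τ : ℝ) (N₁ : X →L[ℝ] X) (N₂ : Y →L[ℝ] Y)
    (u : X × Y × X × Y) : ℝ :=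
  (1 / σ) * ⟪N₁ u.1 - u.1, u.1⟫ + (1 / τ) * ⟪N₂ u.2.1 - u.2.1, u.2.1⟫
    + (1 / σ) * ‖u.2.2.1‖ ^ 2 + (1 / τ) * ‖u.2.2.2‖ ^ 2

end

open Finset
open scoped InnerProduct

section InnerProductSpace

variable {E : Type*} [NormedAddCommGroup E] [InnerProductSpace ℝ E]

theorem real_inner_map_self_le_of_norm_le (A : E →L[ℝ] E) {v : E} {R : ℝ} (hv : ‖v‖ ≤ R) :
    ⟪A v, v⟫ ≤ ‖A‖ * R ^ 2 :=
  calc ⟪A v, v⟫ ≤ ‖A v‖ * ‖v‖ := real_inner_le_norm _ _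
    _ ≤ ‖A‖ * R * R := mul_le_mul (A.le_opNorm_of_le hv) hv (norm_nonneg v)
      (mul_nonneg (norm_nonneg A) ((norm_nonneg v).trans hv))
    _ = ‖A‖ * R ^ 2 := by ring

theorem IsSelfAdjoint.isPositive_sub_one [CompleteSpace E] {N : E →L[ℝ] E}
    (hN : IsSelfAdjoint N) (hge : ∀ v, ‖v‖ ^ 2 ≤ ⟪N v, v⟫) : (N - 1).IsPositive := by
  refine (ContinuousLinearMap.isPositive_iff' _).2 ⟨hN.sub (.one _), fun v => ?_⟩
  rw [sub_apply, one_apply_eq_self, inner_sub_left, real_inner_self_eq_norm_sq]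
  linarith [hge v]

theorem ContinuousLinearMap.IsPositive.neg_two_mul_inner_le {A : E →L[ℝ] E} (hA : A.IsPositive)
    {ρ : ℝ} (hρ : 0 < ρ) (hρ₂ : ρ ≤ 2) (v w : E) :
    -2 * ⟪A w, v + w⟫ ≤ ρ⁻¹ * (⟪A v, v⟫ - ⟪A (v + ρ • w), v + ρ • w⟫) := by
  have hsymm : ⟪A v, w⟫ = ⟪A w, v⟫ := by
    rw [hA.inner_left_eq_inner_right, real_inner_comm]
  have hexpand : ρ⁻¹ * (⟪A v, v⟫ - ⟪A (v + ρ • w), v + ρ • w⟫)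
      = -2 * ⟪A w, v⟫ - ρ * ⟪A w, w⟫ := by
    simp only [map_add, map_smul, inner_add_left, inner_add_right, real_inner_smul_left,
      real_inner_smul_right, hsymm]
    field_simp
    ring
  rw [hexpand, inner_add_right]
  nlinarith [hA.inner_nonneg_left w]

/-- `h` is the variational inequality characterising `p = prox_{c f}(p + q)`. -/
theorem sub_le_inv_mul_inner_of_prox {f : E → ℝ} {c : ℝ} (hc : 0 < c) {p q w : E}
    (h : c * f p + ⟪q, w - p⟫ ≤ c * f w) : f p - f w ≤ c⁻¹ * ⟪q, p - w⟫ := by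
  rw [← neg_sub p w, inner_neg_right] at h
  rw [le_inv_mul_iff₀ hc]
  linarith

end InnerProductSpace

theorem sum_range_inv_mul_sub_le {a r : ℕ → ℝ} {c : ℝ} (hc : 0 < c) (ha : ∀ k, 0 ≤ a k)
    (hr : ∀ k, c ≤ r k) (hmono : Monotone r) (n : ℕ) :
    ∑ k ∈ range n, (r k)⁻¹ * (a k - a (k + 1)) ≤ c⁻¹ * a 0 := by
  have hpos k : 0 < r k := hc.trans_le (hr k)
  have key m : ∑ k ∈ range m, (r k)⁻¹ * (a k - a (k + 1)) + (r m)⁻¹ * a m ≤ (r 0)⁻¹ * a 0 := by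
    induction m with
    | zero => simp
    | succ m ih =>
      have : (r (m + 1))⁻¹ * a (m + 1) ≤ (r m)⁻¹ * a (m + 1) := by
        gcongr
        exacts [ha _, hpos m, hmono m.le_succ]
      rw [sum_range_succ]
      linarith
  have h₀ : (r 0)⁻¹ * a 0 ≤ c⁻¹ * a 0 := by gcongr; exacts [ha 0, hr 0]
  linarith [key n, mul_nonneg (inv_nonneg.2 (hpos n).le) (ha n)]

theorem isBounded_image_const_sub_map {E V : Type*} [NormedAddCommGroup E] [NormedSpace ℝ E]
    [NormedAddCommGroup V] [NormedSpace ℝ V] (c : V) (L : E →L[ℝ] V) {s : Set E}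
    (hs : Bornology.IsBounded s) : Bornology.IsBounded ((fun z => c - L z) '' s) := by
  obtain ⟨R, hR⟩ := isBounded_iff_forall_norm_le.1 hs
  refine isBounded_iff_forall_norm_le.2 ⟨‖c‖ + ‖L‖ * R, ?_⟩
  rintro _ ⟨z, hz, rfl⟩
  calc ‖c - L z‖ ≤ ‖c‖ + ‖L z‖ := norm_sub_le _ _
    _ ≤ ‖c‖ + ‖L‖ * R := by gcongr; exact L.le_opNorm_of_le (hR z hz)

section Lagrangian

variable {X Y : Type*}
  [NormedAddCommGroup X] [InnerProductSpace ℝ X] [NormedAddCommGroup Y] [InnerProductSpace ℝ Y]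
  {F : X → ℝ} {G : Y → ℝ} {K : X →L[ℝ] Y}

/-- The paper's `H(z, z') = L(x, y') − L(x', y)`. -/
def lagrangianGap (F : X → ℝ) (G : Y → ℝ) (K : X →L[ℝ] Y) (z z' : X × Y) : ℝ :=
  (F z.1 + ⟪K z.1, z'.2⟫ - G z'.2) - (F z'.1 + ⟪K z'.1, z.2⟫ - G z.2)

theorem convexOn_lagrangianGap (hF : ConvexOn ℝ Set.univ F) (hG : ConvexOn ℝ Set.univ G)
    (z' : X × Y) : ConvexOn ℝ Set.univ (fun z => lagrangianGap F G K z z') := by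
  let ℓ : X × Y →L[ℝ] ℝ :=
    innerSL ℝ z'.2 ∘L K ∘L .fst ℝ X Y - innerSL ℝ (K z'.1) ∘L .snd ℝ X Y
  have hsum := ((hF.comp_linearMap (.fst ℝ X Y)).add (ℓ.toLinearMap.convexOn convex_univ)).add
    (hG.comp_linearMap (.snd ℝ X Y))
  rw [Set.preimage_univ] at hsum
  refine (hsum.add_const (-G z'.2 - F z'.1)).congr fun z _ => ?_
  simp only [lagrangianGap, ℓ, Pi.add_apply, Function.comp_apply, LinearMap.coe_fst,
    LinearMap.coe_snd, ContinuousLinearMap.coe_coe, sub_apply,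
    ContinuousLinearMap.comp_apply, ContinuousLinearMap.coe_fst', ContinuousLinearMap.coe_snd',
    innerSL_apply_apply, real_inner_comm]
  ring

theorem lagrangianGap_average_le (hF : ConvexOn ℝ Set.univ F) (hG : ConvexOn ℝ Set.univ G)
    (p : ℕ → X) (q : ℕ → Y) (z' : X × Y) (n : ℕ) :
    lagrangianGap F G K ((n + 1 : ℝ)⁻¹ • ∑ k ∈ range (n + 1), p k,
        (n + 1 : ℝ)⁻¹ • ∑ k ∈ range (n + 1), q k) z'
      ≤ (n + 1 : ℝ)⁻¹ * ∑ k ∈ range (n + 1), lagrangianGap F G K (p k, q k) z' := by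
  have hJensen := (convexOn_lagrangianGap (K := K) hF hG z').map_sum_le
    (t := range (n + 1)) (w := fun _ => (n + 1 : ℝ)⁻¹) (p := fun k => (p k, q k))
    (fun _ _ => by positivity) (by simp only [sum_const, card_range, nsmul_eq_mul]; push_cast; field_simp) (fun _ _ => Set.mem_univ _)
  rw [smul_sum, smul_sum, prod_mk_sum, mul_sum]
  simpa only [Prod.smul_mk, smul_eq_mul] using hJensen

end Lagrangian

section MNorm

variable {X Y : Type*}
  [NormedAddCommGroup X] [InnerProductSpace ℝ X] [NormedAddCommGroup Y] [InnerProductSpace ℝ Y]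

theorem MnormSq_eq (σ τ : ℝ) (N₁ : X →L[ℝ] X) (N₂ : Y →L[ℝ] Y) (u : X × Y × X × Y) :
    MnormSq σ τ N₁ N₂ u = ⟪(σ⁻¹ • (N₁ - 1)) u.1, u.1⟫ + ⟪(τ⁻¹ • (N₂ - 1)) u.2.1, u.2.1⟫
      + ⟪(σ⁻¹ • 1 : X →L[ℝ] X) u.2.2.1, u.2.2.1⟫ + ⟪(τ⁻¹ • 1 : Y →L[ℝ] Y) u.2.2.2, u.2.2.2⟫ := by
  simp [MnormSq, real_inner_smul_left]

theorem bddAbove_MnormSq_image (σ τ : ℝ) (N₁ : X →L[ℝ] X) (N₂ : Y →L[ℝ] Y)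
    {S : Set (X × Y × X × Y)} (hS : Bornology.IsBounded S) :
    BddAbove (MnormSq σ τ N₁ N₂ '' S) := by
  obtain ⟨R, hR⟩ := isBounded_iff_forall_norm_le.1 hS
  refine ⟨(‖σ⁻¹ • (N₁ - 1)‖ + ‖τ⁻¹ • (N₂ - 1)‖ + ‖(σ⁻¹ • 1 : X →L[ℝ] X)‖
    + ‖(τ⁻¹ • 1 : Y →L[ℝ] Y)‖) * R ^ 2, ?_⟩
  rintro _ ⟨u, hu, rfl⟩
  have h₂ : ‖u.2‖ ≤ R := (norm_snd_le u).trans (hR u hu)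
  have h₃ : ‖u.2.2‖ ≤ R := (norm_snd_le _).trans h₂
  rw [MnormSq_eq]
  linarith [real_inner_map_self_le_of_norm_le (σ⁻¹ • (N₁ - 1)) ((norm_fst_le u).trans (hR u hu)),
    real_inner_map_self_le_of_norm_le (τ⁻¹ • (N₂ - 1)) ((norm_fst_le _).trans h₂),
    real_inner_map_self_le_of_norm_le (σ⁻¹ • 1 : X →L[ℝ] X) ((norm_fst_le _).trans h₃),
    real_inner_map_self_le_of_norm_le (τ⁻¹ • 1 : Y →L[ℝ] Y) ((norm_snd_le _).trans h₃)]

end MNorm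

section RPDR

variable {X Y : Type*}
  [NormedAddCommGroup X] [InnerProductSpace ℝ X] [CompleteSpace X]
  [NormedAddCommGroup Y] [InnerProductSpace ℝ Y] [CompleteSpace Y]
  {F : X → ℝ} {G : Y → ℝ} {K : X →L[ℝ] Y} {σ τ : ℝ} {N₁ : X →L[ℝ] X} {N₂ : Y →L[ℝ] Y}

/-- The paper's `û = (x, y, x + σK*y, y − τKx)`; at a saddle point `(x, y)` of `L` it is a fixed
point of `T`. -/
noncomputable def rpdrLift (σ τ : ℝ) (K : X →L[ℝ] Y) : X × Y →L[ℝ] X × Y × X × Y :=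
  (ContinuousLinearMap.fst ℝ X Y).prod <| (ContinuousLinearMap.snd ℝ X Y).prod <|
    (.fst ℝ X Y + σ • K† ∘L .snd ℝ X Y).prod (.snd ℝ X Y - τ • K ∘L .fst ℝ X Y)

theorem rpdrLift_apply (σ τ : ℝ) (K : X →L[ℝ] Y) (z : X × Y) :
    rpdrLift σ τ K z = (z.1, z.2, z.1 + σ • (K†) z.2, z.2 - τ • K z.1) :=
  rfl

/-- The right-hand side is `-⟨T u − u, T u − û⟩_M`, split into the four blocks of `M`. -/
theorem lagrangianGap_le_neg_inner (hσ : 0 < σ) (hτ : 0 < τ)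
    {x xb xt xs x₀ : X} {y yb yt ys y₀ : Y}
    (hxt : N₁ xt = (N₁ x - x) + xb - σ • (K†) yt)
    (hyt : N₂ yt = (N₂ y - y) + yb + τ • K xt)
    (hxs : σ * F xs + ⟪(2 : ℝ) • xt - xb - xs, x₀ - xs⟫ ≤ σ * F x₀)
    (hys : τ * G ys + ⟪(2 : ℝ) • yt - yb - ys, y₀ - ys⟫ ≤ τ * G y₀) :
    lagrangianGap F G K (xs, ys) (x₀, y₀) ≤
      -(⟪(σ⁻¹ • (N₁ - 1)) (xt - x), (x - x₀) + (xt - x)⟫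
        + ⟪(τ⁻¹ • (N₂ - 1)) (yt - y), (y - y₀) + (yt - y)⟫
        + ⟪(σ⁻¹ • 1 : X →L[ℝ] X) (xs - xt), (xb - (x₀ + σ • (K†) y₀)) + (xs - xt)⟫
        + ⟪(τ⁻¹ • 1 : Y →L[ℝ] Y) (ys - yt), (yb - (y₀ - τ • K x₀)) + (ys - yt)⟫) := by
  have hx : N₁ (xt - x) - (xt - x) = xb - xt - σ • (K†) yt := by rw [map_sub, hxt]; module
  have hy : N₂ (yt - y) - (yt - y) = yb - yt + τ • K xt := by rw [map_sub, hyt]; module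
  have hid : σ⁻¹ * ⟪(2 : ℝ) • xt - xb - xs, xs - x₀⟫ + τ⁻¹ * ⟪(2 : ℝ) • yt - yb - ys, ys - y₀⟫
        + ⟪K xs, y₀⟫ - ⟪K x₀, ys⟫
      = -(⟪(σ⁻¹ • (N₁ - 1)) (xt - x), (x - x₀) + (xt - x)⟫
        + ⟪(τ⁻¹ • (N₂ - 1)) (yt - y), (y - y₀) + (yt - y)⟫
        + ⟪(σ⁻¹ • 1 : X →L[ℝ] X) (xs - xt), (xb - (x₀ + σ • (K†) y₀)) + (xs - xt)⟫
        + ⟪(τ⁻¹ • 1 : Y →L[ℝ] Y) (ys - yt), (yb - (y₀ - τ • K x₀)) + (ys - yt)⟫) := by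
    simp only [smul_apply, sub_apply, one_apply_eq_self, hx, hy, sub_add_sub_cancel']
    simp only [inner_sub_left, inner_sub_right, inner_add_left, inner_add_right,
      real_inner_smul_left, real_inner_smul_right, ContinuousLinearMap.adjoint_inner_left,
      ContinuousLinearMap.adjoint_inner_right, map_sub, map_smul]
    simp only [real_inner_comm xb xt, real_inner_comm xs xb, real_inner_comm xs xt,
      real_inner_comm yb yt, real_inner_comm ys yb, real_inner_comm ys yt,
      real_inner_comm ys (K x₀), real_inner_comm yt (K xt)]
    field_simp
    ring
  rw [lagrangianGap, ← hid]
  linarith [sub_le_inv_mul_inner_of_prox hσ hxs, sub_le_inv_mul_inner_of_prox hτ hys]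

/-- `(xt k, yt k)` are the first two components of `T u^k` and `(xtst (k+1), ytst (k+1))` its
transitional variables; the prox steps enter through their variational inequalities. -/
structure IsRPDRSequence (F : X → ℝ) (G : Y → ℝ) (K : X →L[ℝ] Y) (σ τ : ℝ)
    (N₁ : X →L[ℝ] X) (N₂ : Y →L[ℝ] Y) (ρ ρx ρy : ℕ → ℝ)
    (x xt xtst xb : ℕ → X) (y yt ytst yb : ℕ → Y) : Prop where
  primal_step k : N₁ (xt k) = (N₁ (x k) - x k) + xb k - σ • (K†) (yt k)
  dual_step k : N₂ (yt k) = (N₂ (y k) - y k) + yb k + τ • K (xt k)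
  primal_prox k (w : X) :
    σ * F (xtst (k + 1)) + ⟪(2 : ℝ) • xt k - xb k - xtst (k + 1), w - xtst (k + 1)⟫ ≤ σ * F w
  dual_prox k (w : Y) :
    τ * G (ytst (k + 1)) + ⟪(2 : ℝ) • yt k - yb k - ytst (k + 1), w - ytst (k + 1)⟫ ≤ τ * G w
  relax_x k : x (k + 1) = (1 - ρ k) • x k + ρ k • xt k
  relax_y k : y (k + 1) = (1 - ρ k) • y k + ρ k • yt k
  relax_xb k : xb (k + 1) = xb k + ρx k • (xtst (k + 1) - xt k)
  relax_yb k : yb (k + 1) = yb k + ρy k • (ytst (k + 1) - yt k)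

theorem IsRPDRSequence.two_mul_sum_lagrangianGap_le {ρ ρx ρy : ℕ → ℝ}
    {x xt xtst xb : ℕ → X} {y yt ytst yb : ℕ → Y}
    (h : IsRPDRSequence F G K σ τ N₁ N₂ ρ ρx ρy x xt xtst xb y yt ytst yb)
    (hσ : 0 < σ) (hτ : 0 < τ) (hN₁ : (N₁ - 1).IsPositive) (hN₂ : (N₂ - 1).IsPositive)
    {ρl : ℝ} (hρl : 0 < ρl) (hρ : ∀ k, ρ k ∈ Set.Icc ρl 2) (hρx : ∀ k, ρx k ∈ Set.Icc ρl 2)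
    (hρy : ∀ k, ρy k ∈ Set.Icc ρl 2) (hρmono : Monotone ρ) (hρxmono : Monotone ρx)
    (hρymono : Monotone ρy) (z : X × Y) (n : ℕ) :
    2 * ∑ k ∈ range n, lagrangianGap F G K (xtst (k + 1), ytst (k + 1)) z
      ≤ ρl⁻¹ * MnormSq σ τ N₁ N₂ ((x 0, y 0, xb 0, yb 0) - rpdrLift σ τ K z) := by
  obtain ⟨x₀, y₀⟩ := z
  have hA₁ := hN₁.smul_of_nonneg (inv_nonneg.2 hσ.le)
  have hA₂ := hN₂.smul_of_nonneg (inv_nonneg.2 hτ.le)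
  have hA₃ := (ContinuousLinearMap.isPositive_one (E := X)).smul_of_nonneg (inv_nonneg.2 hσ.le)
  have hA₄ := (ContinuousLinearMap.isPositive_one (E := Y)).smul_of_nonneg (inv_nonneg.2 hτ.le)
  set e₁ := fun k => ⟪(σ⁻¹ • (N₁ - 1)) (x k - x₀), x k - x₀⟫
  set e₂ := fun k => ⟪(τ⁻¹ • (N₂ - 1)) (y k - y₀), y k - y₀⟫
  set ξ := x₀ + σ • (K†) y₀
  set η := y₀ - τ • K x₀
  set e₃ := fun k => ⟪(σ⁻¹ • 1 : X →L[ℝ] X) (xb k - ξ), xb k - ξ⟫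
  set e₄ := fun k => ⟪(τ⁻¹ • 1 : Y →L[ℝ] Y) (yb k - η), yb k - η⟫
  have step k : 2 * lagrangianGap F G K (xtst (k + 1), ytst (k + 1)) (x₀, y₀)
      ≤ (ρ k)⁻¹ * (e₁ k - e₁ (k + 1)) + (ρ k)⁻¹ * (e₂ k - e₂ (k + 1))
        + (ρx k)⁻¹ * (e₃ k - e₃ (k + 1)) + (ρy k)⁻¹ * (e₄ k - e₄ (k + 1)) := by
    have hpos (r : ℕ → ℝ) (hr : ∀ k, r k ∈ Set.Icc ρl 2) : 0 < r k := hρl.trans_le (hr k).1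
    have h₁ := hA₁.neg_two_mul_inner_le (hpos ρ hρ) (hρ k).2 (x k - x₀) (xt k - x k)
    have h₂ := hA₂.neg_two_mul_inner_le (hpos ρ hρ) (hρ k).2 (y k - y₀) (yt k - y k)
    have h₃ := hA₃.neg_two_mul_inner_le (hpos ρx hρx) (hρx k).2 (xb k - ξ) (xtst (k + 1) - xt k)
    have h₄ := hA₄.neg_two_mul_inner_le (hpos ρy hρy) (hρy k).2 (yb k - η) (ytst (k + 1) - yt k)
    rw [show x k - x₀ + ρ k • (xt k - x k) = x (k + 1) - x₀ by rw [h.relax_x]; module] at h₁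
    rw [show y k - y₀ + ρ k • (yt k - y k) = y (k + 1) - y₀ by rw [h.relax_y]; module] at h₂
    rw [show xb k - ξ + ρx k • (xtst (k + 1) - xt k) = xb (k + 1) - ξ by
      rw [h.relax_xb]; abel] at h₃
    rw [show yb k - η + ρy k • (ytst (k + 1) - yt k) = yb (k + 1) - η by
      rw [h.relax_yb]; abel] at h₄
    linarith [lagrangianGap_le_neg_inner (F := F) (G := G) hσ hτ (h.primal_step k) (h.dual_step k)
      (h.primal_prox k x₀) (h.dual_prox k y₀)]
  have hM : MnormSq σ τ N₁ N₂ ((x 0, y 0, xb 0, yb 0) - rpdrLift σ τ K (x₀, y₀))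
      = e₁ 0 + e₂ 0 + e₃ 0 + e₄ 0 := by
    rw [MnormSq_eq, rpdrLift_apply]; rfl
  rw [mul_sum, hM]
  refine (sum_le_sum fun k _ => step k).trans ?_
  simp only [sum_add_distrib]
  linarith [sum_range_inv_mul_sub_le (a := e₁) hρl (fun _ => hA₁.inner_nonneg_left _)
      (fun k => (hρ k).1) hρmono n,
    sum_range_inv_mul_sub_le (a := e₂) hρl (fun _ => hA₂.inner_nonneg_left _)
      (fun k => (hρ k).1) hρmono n,
    sum_range_inv_mul_sub_le (a := e₃) hρl (fun _ => hA₃.inner_nonneg_left _)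
      (fun k => (hρx k).1) hρxmono n,
    sum_range_inv_mul_sub_le (a := e₄) hρl (fun _ => hA₄.inner_nonneg_left _)
      (fun k => (hρy k).1) hρymono n]

end RPDR

section

variable {X Y : Type*}
  [NormedAddCommGroup X] [InnerProductSpace ℝ X] [CompleteSpace X]
  [NormedAddCommGroup Y] [InnerProductSpace ℝ Y] [CompleteSpace Y]

theorem stmt_7_general
    (F : X → ℝ) (G : Y → ℝ)
    (hF : ConvexOn ℝ Set.univ F)
    (hG : ConvexOn ℝ Set.univ G)
    (K : X →L[ℝ] Y)
    (σ τ : ℝ) (hσ : 0 < σ) (hτ : 0 < τ)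
    (N₁ : X →L[ℝ] X) (N₂ : Y →L[ℝ] Y)
    (hN₁sa : IsSelfAdjoint N₁) (hN₂sa : IsSelfAdjoint N₂)
    (hN₁ : ∀ v : X, ‖v‖ ^ 2 ≤ ⟪N₁ v, v⟫)
    (hN₂ : ∀ v : Y, ‖v‖ ^ 2 ≤ ⟪N₂ v, v⟫)
    -- nondecreasing relaxation parameters in `[ρ_l, ρ_u] ⊂ (0, 2)`
    (ρ ρx ρy : ℕ → ℝ) (hρmono : Monotone ρ) (hρxmono : Monotone ρx)
    (hρymono : Monotone ρy)
    (ρl ρu : ℝ) (hρl : 0 < ρl) (hρu : ρu < 2)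
    (hρb : ∀ k, ρl ≤ ρ k ∧ ρ k ≤ ρu) (hρxb : ∀ k, ρl ≤ ρx k ∧ ρx k ≤ ρu)
    (hρyb : ∀ k, ρl ≤ ρy k ∧ ρy k ≤ ρu)
    -- the RPDR iteration sequence together with its transitional variables:
    -- `(xt k, yt k)` are the first two components of `𝒯 u^k`, and
    -- `(xtst (k+1), ytst (k+1))` are the transitional variables of step `k`
    (x xt xtst xb : ℕ → X) (y yt ytst yb : ℕ → Y)
    (hxt : ∀ k, N₁ (xt k) = (N₁ (x k) - x k) + xb k
        - σ • (ContinuousLinearMap.adjoint K) (yt k))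
    (hyt : ∀ k, N₂ (yt k) = (N₂ (y k) - y k) + yb k + τ • K (xt k))
    (hxtst : ∀ k, ∀ w : X,
        σ * F (xtst (k + 1)) + ⟪(2 : ℝ) • xt k - xb k - xtst (k + 1), w - xtst (k + 1)⟫
          ≤ σ * F w)
    (hytst : ∀ k, ∀ w : Y,
        τ * G (ytst (k + 1)) + ⟪(2 : ℝ) • yt k - yb k - ytst (k + 1), w - ytst (k + 1)⟫
          ≤ τ * G w)
    (hx : ∀ k, x (k + 1) = (1 - ρ k) • x k + ρ k • xt k)
    (hy : ∀ k, y (k + 1) = (1 - ρ k) • y k + ρ k • yt k)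
    (hxb : ∀ k, xb (k + 1) = xb k + ρx k • (xtst (k + 1) - xt k))
    (hyb : ∀ k, yb (k + 1) = yb k + ρy k • (ytst (k + 1) - yt k))
    -- a bounded set `B = B₁ × B₂` containing a saddle point
    (B₁ : Set X) (B₂ : Set Y)
    (hB₁ : Bornology.IsBounded B₁) (hB₂ : Bornology.IsBounded B₂)
    -- the number of steps
    (Kit : ℕ) :
    ∀ x₀ ∈ B₁, ∀ y₀ ∈ B₂,
      (F ((Kit + 1 : ℝ)⁻¹ • ∑ k ∈ Finset.range (Kit + 1), xtst (k + 1))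
          + ⟪K ((Kit + 1 : ℝ)⁻¹ • ∑ k ∈ Finset.range (Kit + 1), xtst (k + 1)), y₀⟫
          - G y₀)
        - (F x₀
            + ⟪K x₀, (Kit + 1 : ℝ)⁻¹ • ∑ k ∈ Finset.range (Kit + 1), ytst (k + 1)⟫
            - G ((Kit + 1 : ℝ)⁻¹ • ∑ k ∈ Finset.range (Kit + 1), ytst (k + 1)))
      ≤ (1 / (2 * (Kit + 1 : ℝ) * ρl)) *
          sSup ((fun z : X × Y =>
            MnormSq σ τ N₁ N₂
              ((x 0, y 0, xb 0, yb 0)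
                - (z.1, z.2, z.1 + σ • (ContinuousLinearMap.adjoint K) z.2,
                    z.2 - τ • K z.1))) '' (B₁ ×ˢ B₂)) := by
  intro x₀ hx₀ y₀ hy₀
  have hseq : IsRPDRSequence F G K σ τ N₁ N₂ ρ ρx ρy x xt xtst xb y yt ytst yb :=
    ⟨hxt, hyt, hxtst, hytst, hx, hy, hxb, hyb⟩
  have hIcc (r : ℕ → ℝ) (hr : ∀ k, ρl ≤ r k ∧ r k ≤ ρu) k : r k ∈ Set.Icc ρl 2 :=
    ⟨(hr k).1, (hr k).2.trans hρu.le⟩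
  have hsum := hseq.two_mul_sum_lagrangianGap_le hσ hτ (hN₁sa.isPositive_sub_one hN₁)
    (hN₂sa.isPositive_sub_one hN₂) hρl (hIcc ρ hρb) (hIcc ρx hρxb) (hIcc ρy hρyb)
    hρmono hρxmono hρymono (x₀, y₀) (Kit + 1)
  have hbdd := bddAbove_MnormSq_image σ τ N₁ N₂
    (isBounded_image_const_sub_map (x 0, y 0, xb 0, yb 0) (rpdrLift σ τ K) (hB₁.prod hB₂))
  rw [Set.image_image] at hbdd
  have hM := le_csSup hbdd ⟨(x₀, y₀), ⟨hx₀, hy₀⟩, rfl⟩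
  simp only [rpdrLift_apply] at hsum hM
  set M := MnormSq σ τ N₁ N₂
    ((x 0, y 0, xb 0, yb 0) - (x₀, y₀, x₀ + σ • (K†) y₀, y₀ - τ • K x₀))
  calc _ ≤ ((Kit : ℝ) + 1)⁻¹ *
        ∑ k ∈ range (Kit + 1), lagrangianGap F G K (xtst (k + 1), ytst (k + 1)) (x₀, y₀) :=
        lagrangianGap_average_le hF hG (fun k => xtst (k + 1)) (fun k => ytst (k + 1)) (x₀, y₀) Kit
    _ ≤ ((Kit : ℝ) + 1)⁻¹ * (2⁻¹ * (ρl⁻¹ * M)) := by gcongr; linarith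
    _ = 1 / (2 * (Kit + 1 : ℝ) * ρl) * M := by field_simp
    _ ≤ _ := by gcongr

/-- **Theorem 2.7.** For the deterministic relaxed preconditioned Douglas–Rachford
iteration (RPDR) with nondecreasing relaxation parameters in `[ρ_l, ρ_u] ⊂ (0,2)`, the
ergodic averages `z_{test,K}` of the transitional variables satisfy, for every bounded
set `B = B₁ × B₂ ⊂ dom F × dom G` containing a saddle point,
`sup_{z ∈ B} ℋ(z_{test,K}, z) ≤ (1/(2(K+1)ρ_l)) · sup_{(x,y) ∈ B} ‖u⁰ − u‖²_𝐌`,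
where `u = (x, y, x + σK*y, y − τKx)`; in particular the restricted primal–dual gap
decays at rate `O(1/K)`. -/
theorem stmt_7
    (F : X → ℝ) (G : Y → ℝ)
    (hF : ConvexOn ℝ Set.univ F) (hFlsc : LowerSemicontinuous F)
    (hG : ConvexOn ℝ Set.univ G) (hGlsc : LowerSemicontinuous G)
    (K : X →L[ℝ] Y)
    (σ τ : ℝ) (hσ : 0 < σ) (hτ : 0 < τ)
    (N₁ : X →L[ℝ] X) (N₂ : Y →L[ℝ] Y)
    (hN₁sa : IsSelfAdjoint N₁) (hN₂sa : IsSelfAdjoint N₂)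
    (hN₁ : ∀ v : X, ‖v‖ ^ 2 ≤ ⟪N₁ v, v⟫)
    (hN₂ : ∀ v : Y, ‖v‖ ^ 2 ≤ ⟪N₂ v, v⟫)
    -- nondecreasing relaxation parameters in `[ρ_l, ρ_u] ⊂ (0, 2)`
    (ρ ρx ρy : ℕ → ℝ) (hρmono : Monotone ρ) (hρxmono : Monotone ρx)
    (hρymono : Monotone ρy)
    (ρl ρu : ℝ) (hρl : 0 < ρl) (hρu : ρu < 2)
    (hρb : ∀ k, ρl ≤ ρ k ∧ ρ k ≤ ρu) (hρxb : ∀ k, ρl ≤ ρx k ∧ ρx k ≤ ρu)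
    (hρyb : ∀ k, ρl ≤ ρy k ∧ ρy k ≤ ρu)
    -- the RPDR iteration sequence together with its transitional variables:
    -- `(xt k, yt k)` are the first two components of `𝒯 u^k`, and
    -- `(xtst (k+1), ytst (k+1))` are the transitional variables of step `k`
    (x xt xtst xb : ℕ → X) (y yt ytst yb : ℕ → Y)
    (hxt : ∀ k, N₁ (xt k) = (N₁ (x k) - x k) + xb k
        - σ • (ContinuousLinearMap.adjoint K) (yt k))
    (hyt : ∀ k, N₂ (yt k) = (N₂ (y k) - y k) + yb k + τ • K (xt k))
    (hxtst : ∀ k, ∀ w : X,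
        σ * F (xtst (k + 1)) + ⟪(2 : ℝ) • xt k - xb k - xtst (k + 1), w - xtst (k + 1)⟫
          ≤ σ * F w)
    (hytst : ∀ k, ∀ w : Y,
        τ * G (ytst (k + 1)) + ⟪(2 : ℝ) • yt k - yb k - ytst (k + 1), w - ytst (k + 1)⟫
          ≤ τ * G w)
    (hx : ∀ k, x (k + 1) = (1 - ρ k) • x k + ρ k • xt k)
    (hy : ∀ k, y (k + 1) = (1 - ρ k) • y k + ρ k • yt k)
    (hxb : ∀ k, xb (k + 1) = xb k + ρx k • (xtst (k + 1) - xt k))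
    (hyb : ∀ k, yb (k + 1) = yb k + ρy k • (ytst (k + 1) - yt k))
    -- a bounded set `B = B₁ × B₂` containing a saddle point
    (B₁ : Set X) (B₂ : Set Y)
    (hB₁ : Bornology.IsBounded B₁) (hB₂ : Bornology.IsBounded B₂)
    (hsaddle : ∃ xs ∈ B₁, ∃ ys ∈ B₂, ∀ (x' : X) (y' : Y),
        (F xs + ⟪K xs, y'⟫ - G y') ≤ (F xs + ⟪K xs, ys⟫ - G ys)
        ∧ (F xs + ⟪K xs, ys⟫ - G ys) ≤ (F x' + ⟪K x', ys⟫ - G ys))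
    -- the number of steps
    (Kit : ℕ) :
    ∀ x₀ ∈ B₁, ∀ y₀ ∈ B₂,
      (F ((Kit + 1 : ℝ)⁻¹ • ∑ k ∈ Finset.range (Kit + 1), xtst (k + 1))
          + ⟪K ((Kit + 1 : ℝ)⁻¹ • ∑ k ∈ Finset.range (Kit + 1), xtst (k + 1)), y₀⟫
          - G y₀)
        - (F x₀
            + ⟪K x₀, (Kit + 1 : ℝ)⁻¹ • ∑ k ∈ Finset.range (Kit + 1), ytst (k + 1)⟫
            - G ((Kit + 1 : ℝ)⁻¹ • ∑ k ∈ Finset.range (Kit + 1), ytst (k + 1)))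
      ≤ (1 / (2 * (Kit + 1 : ℝ) * ρl)) *
          sSup ((fun z : X × Y =>
            MnormSq σ τ N₁ N₂
              ((x 0, y 0, xb 0, yb 0)
                - (z.1, z.2, z.1 + σ • (ContinuousLinearMap.adjoint K) z.2,
                    z.2 - τ • K z.1))) '' (B₁ ×ˢ B₂)) :=
  stmt_7_general F G hF hG K σ τ hσ hτ N₁ N₂ hN₁sa hN₂sa hN₁ hN₂ ρ ρx ρy hρmono hρxmono hρymono ρl
    ρu hρl hρu hρb hρxb hρyb x xt xtst xb y yt ytst yb hxt hyt hxtst hytst hx hy hxb hyb B₁ B₂ hB₁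
    hB₂ Kit

end
end

section
/- Let (s^k) and (s̃^{k+1}) be F_k-measurable Borel random vectors in Y with the update rule s_i^{k+1} = s̃_i^{k+1} if i = i_k and s_i^{k+1} = s_i^k otherwise. Then for any continuous φ: Y_i → ℝ (with the relevant expectations finite) and any k ≥ 0, E[φ(s_i^{k+1})] = E[ Σ_{j=0}^{k} p_i (1−p_i)^j φ(s̃_i^{k+1−j}) ] + (1−p_i)^{k+1} φ(s_i^0). -/
/-!
Both `s̃^{m+1}` and `s^m` are measurable with respect to `σ(i_0, …, i_{m-1})`, which is
independent of `i_m`. Splitting on the event `{i_m = i}` therefore gives the affine recursion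
`E φ(s_i^{m+1}) = p_i E φ(s̃_i^{m+1}) + (1 - p_i) E φ(s_i^m)`, and unrolling it down to the
deterministic `s^0` gives the formula.
-/

open MeasureTheory ProbabilityTheory

namespace ProbabilityTheory

variable {Ω : Type*} {m₁ m₂ mΩ : MeasurableSpace Ω} {μ : Measure Ω}

theorem iIndep.indep_biSup_range {m : ℕ → MeasurableSpace Ω} (h_le : ∀ j, m j ≤ mΩ)
    (h_indep : iIndep m μ) (k : ℕ) : Indep (⨆ j ∈ Finset.range k, m j) (m k) μ := by
  simpa using indep_iSup_of_disjoint h_le h_indep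
    (S := (Finset.range k : Set ℕ)) (T := {k}) (by simp)

theorem Indep.integral_piecewise_eq {E : Type*} [NormedAddCommGroup E] [NormedSpace ℝ E]
    [MeasurableSpace E] [BorelSpace E] [SecondCountableTopology E] [IsProbabilityMeasure μ]
    (h : Indep m₁ m₂ μ) (hm₁ : m₁ ≤ mΩ) {A : Set Ω} [DecidablePred (· ∈ A)]
    (hA : MeasurableSet[m₁] A) {F G : Ω → E}
    (hF : Measurable[m₂] F) (hG : Measurable[m₂] G)
    (hFi : Integrable F μ) (hGi : Integrable G μ) :
    ∫ ω, A.piecewise F G ω ∂μ = μ.real A • ∫ ω, F ω ∂μ + (1 - μ.real A) • ∫ ω, G ω ∂μ := by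
  have setIntegral_eq {B : Set Ω} (hB : MeasurableSet[m₁] B) {H : Ω → E}
      (hH : Measurable[m₂] H) (hHi : Integrable H μ) :
      ∫ ω in B, H ω ∂μ = μ.real B • ∫ ω, H ω ∂μ :=
    (indep_of_indep_of_le_right h hH.comap_le).setIntegral_eq_smul (f := id) hm₁
      hHi.aemeasurable hB aestronglyMeasurable_id
  rw [integral_piecewise (hm₁ A hA) hFi.integrableOn hGi.integrableOn, setIntegral_eq hA hF hFi,
    setIntegral_eq hA.compl hG hGi, probReal_compl_eq_one_sub (hm₁ A hA)]

end ProbabilityTheory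

theorem measurable_biSup_range_comap {Ω β : Type*} [mβ : MeasurableSpace β] (X : ℕ → Ω → β)
    (k : ℕ) : Measurable[⨆ j ∈ Finset.range (k + 1), mβ.comap (X j)] (X k) :=
  Measurable.of_comap_le (le_iSup₂ (f := fun j (_ : j ∈ Finset.range (k + 1)) => mβ.comap (X j))
    k (Finset.self_mem_range_succ k))

theorem monotone_biSup_range {α : Type*} [CompleteLattice α] (m : ℕ → α) :
    Monotone fun k => ⨆ j ∈ Finset.range k, m j :=
  fun _ _ hab => biSup_mono fun _ hj =>
    Finset.mem_range.2 ((Finset.mem_range.1 hj).trans_le hab)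

theorem eq_sum_of_affine_recurrence {R : Type*} [CommSemiring R] {a b : ℕ → R} {p q : R}
    (h : ∀ m, a (m + 1) = p * b (m + 1) + q * a m) (k : ℕ) :
    a (k + 1) = ∑ j ∈ Finset.range (k + 1), p * q ^ j * b (k + 1 - j) + q ^ (k + 1) * a 0 := by
  induction k with
  | zero => simp [h]
  | succ k ih =>
    have shift : ∑ j ∈ Finset.range (k + 1), q * (p * q ^ j * b (k + 1 - j))
        = ∑ j ∈ Finset.range (k + 1), p * q ^ (j + 1) * b (k + 1 + 1 - (j + 1)) :=
      Finset.sum_congr rfl fun j _ => by rw [Nat.add_sub_add_right]; ring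
    rw [h, ih, Finset.sum_range_succ' _ (k + 1), mul_add, Finset.mul_sum, shift, Nat.sub_zero]
    ring

theorem measurable_of_coordinate_update {Ω ι : Type*} {E : ι → Type*}
    [∀ i, MeasurableSpace (E i)] [MeasurableSpace ι] [MeasurableSingletonClass ι] [DecidableEq ι]
    {ℱ : ℕ → MeasurableSpace Ω} (hℱ : Monotone ℱ)
    {idx : ℕ → Ω → ι} (hidx : ∀ k, Measurable[ℱ (k + 1)] (idx k))
    {s stilde : ℕ → Ω → ∀ i, E i} (hs0 : Measurable[ℱ 0] (s 0))
    (hstilde : ∀ k, Measurable[ℱ k] (stilde (k + 1)))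
    (hupd : ∀ k ω i', s (k + 1) ω i' = if idx k ω = i' then stilde (k + 1) ω i' else s k ω i')
    (k : ℕ) : Measurable[ℱ k] (s k) := by
  induction k with
  | zero => exact hs0
  | succ k ih =>
    have hle := hℱ k.le_succ
    refine @measurable_pi_lambda _ _ _ (ℱ (k + 1)) _ _ fun i' => ?_
    simp_rw [hupd k _ i']
    exact Measurable.ite (hidx k (measurableSet_singleton i'))
      ((measurable_pi_apply i').comp ((hstilde k).mono hle le_rfl))
      ((measurable_pi_apply i').comp (ih.mono hle le_rfl))

theorem stmt_12_general
    {n : ℕ} {E : Fin n → Type*} [∀ i, NormedAddCommGroup (E i)]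
    [∀ i, MeasurableSpace (E i)] [∀ i, BorelSpace (E i)]
    {Ω : Type*} [MeasurableSpace Ω] (μ : MeasureTheory.Measure Ω)
    [IsProbabilityMeasure μ]
    -- i.i.d. index selection variables
    (idx : ℕ → Ω → Fin n) (hidxmeas : ∀ k, Measurable (idx k))
    (p : Fin n → ℝ) (hp : ∀ i, p i ∈ Set.Ioo (0 : ℝ) 1)
    (hident : ∀ k i, μ {ω | idx k ω = i} = ENNReal.ofReal (p i))
    (hindep : iIndepFun idx μ)
    -- the filtration generated by `i_0, …, i_{k−1}`
    (ℱ : ℕ → MeasurableSpace Ω)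
    (hℱ : ∀ k, ℱ k = ⨆ j ∈ Finset.range k, MeasurableSpace.comap (idx j) ⊤)
    -- the update rule
    (s stilde : ℕ → Ω → ∀ i, E i)
    (s0 : ∀ i, E i) (hs0 : ∀ ω, s 0 ω = s0)
    (hstilde_meas : ∀ k, Measurable[ℱ k] (stilde (k + 1)))
    (hupd : ∀ k ω i', s (k + 1) ω i' = if idx k ω = i' then stilde (k + 1) ω i'
        else s k ω i')
    -- a fixed block `i` and a continuous test function `φ` with finite expectations
    (i : Fin n) (φ : E i → ℝ) (hφ : Continuous φ)
    (hint : ∀ m, Integrable (fun ω => φ (stilde (m + 1) ω i)) μ)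
    (hint' : ∀ m, Integrable (fun ω => φ (s m ω i)) μ)
    (k : ℕ) :
    ∫ ω, φ (s (k + 1) ω i) ∂μ
      = (∫ ω, ∑ j ∈ Finset.range (k + 1),
            p i * (1 - p i) ^ j * φ (stilde (k + 1 - j) ω i) ∂μ)
        + (1 - p i) ^ (k + 1) * φ (s0 i) := by
  have hidx_le j : MeasurableSpace.comap (idx j) ⊤ ≤ ‹MeasurableSpace Ω› := (hidxmeas j).comap_le
  have hs_meas : ∀ m, Measurable[ℱ m] (s m) := by
    refine measurable_of_coordinate_update (funext hℱ ▸ monotone_biSup_range _) (fun k => ?_) ?_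
      hstilde_meas hupd
    · exact hℱ (k + 1) ▸ measurable_biSup_range_comap idx k
    · rw [funext hs0]
      exact measurable_const
  have step m : ∫ ω, φ (s (m + 1) ω i) ∂μ
      = p i * ∫ ω, φ (stilde (m + 1) ω i) ∂μ + (1 - p i) * ∫ ω, φ (s m ω i) ∂μ := by
    have hA : μ.real {ω | idx m ω = i} = p i := by
      rw [measureReal_def, hident, ENNReal.toReal_ofReal (hp i).1.le]
    have h := (hℱ m ▸ ((iIndepFun_iff_iIndep _ _ _).mp hindep).indep_biSup_range hidx_le m).symm
      |>.integral_piecewise_eq (hidx_le m) (A := {ω | idx m ω = i}) ⟨{i}, trivial, rfl⟩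
        (hφ.measurable.comp ((measurable_pi_apply i).comp (hstilde_meas m)))
        (hφ.measurable.comp ((measurable_pi_apply i).comp (hs_meas m))) (hint m) (hint' m)
    rw [hA] at h
    simpa [Set.piecewise, hupd, apply_ite φ] using h
  have hint_sub : ∀ j ∈ Finset.range (k + 1), Integrable (fun ω => φ (stilde (k + 1 - j) ω i)) μ :=
    fun j hj => by
      rw [Nat.sub_add_comm (Nat.lt_succ_iff.1 (Finset.mem_range.1 hj))]
      exact hint _
  rw [eq_sum_of_affine_recurrence (a := fun m => ∫ ω, φ (s m ω i) ∂μ)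
      (b := fun m => ∫ ω, φ (stilde m ω i) ∂μ) step k,
    integral_finsetSum _ fun j hj => (hint_sub j hj).const_mul _]
  simp only [integral_const_mul, hs0, integral_const, probReal_univ, one_smul]

/-- **Lemma 4.3 (i).** For the block-coordinate update rule
`s_i^{k+1} = s̃_i^{k+1}` if `i = i_k` and `s_i^{k+1} = s_i^k` otherwise, driven by
i.i.d. indices `(i_k)` with `P(i_k = i) = p_i`, and with `s̃^{k+1}` being
`𝔉_k`-measurable and `s^0` deterministic, one has for any continuous `φ : Y_i → ℝ`
(with all relevant expectations finite):
`𝔼[φ(s_i^{k+1})] = 𝔼[Σ_{j=0}^{k} p_i (1−p_i)^j φ(s̃_i^{k+1−j})] + (1−p_i)^{k+1} φ(s_i^0)`. -/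
theorem stmt_12
    {n : ℕ} {E : Fin n → Type*} [∀ i, NormedAddCommGroup (E i)]
    [∀ i, InnerProductSpace ℝ (E i)] [∀ i, CompleteSpace (E i)]
    [∀ i, SecondCountableTopology (E i)]
    [∀ i, MeasurableSpace (E i)] [∀ i, BorelSpace (E i)]
    {Ω : Type*} [MeasurableSpace Ω] (μ : MeasureTheory.Measure Ω)
    [IsProbabilityMeasure μ]
    -- i.i.d. index selection variables
    (idx : ℕ → Ω → Fin n) (hidxmeas : ∀ k, Measurable (idx k))
    (p : Fin n → ℝ) (hp : ∀ i, p i ∈ Set.Ioo (0 : ℝ) 1) (hpsum : ∑ i, p i = 1)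
    (hident : ∀ k i, μ {ω | idx k ω = i} = ENNReal.ofReal (p i))
    (hindep : iIndepFun idx μ)
    -- the filtration generated by `i_0, …, i_{k−1}`
    (ℱ : ℕ → MeasurableSpace Ω)
    (hℱ : ∀ k, ℱ k = ⨆ j ∈ Finset.range k, MeasurableSpace.comap (idx j) ⊤)
    -- the update rule
    (s stilde : ℕ → Ω → ∀ i, E i)
    (s0 : ∀ i, E i) (hs0 : ∀ ω, s 0 ω = s0)
    (hstilde_meas : ∀ k, Measurable[ℱ k] (stilde (k + 1)))
    (hupd : ∀ k ω i', s (k + 1) ω i' = if idx k ω = i' then stilde (k + 1) ω i'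
        else s k ω i')
    -- a fixed block `i` and a continuous test function `φ` with finite expectations
    (i : Fin n) (φ : E i → ℝ) (hφ : Continuous φ)
    (hint : ∀ m, Integrable (fun ω => φ (stilde (m + 1) ω i)) μ)
    (hint' : ∀ m, Integrable (fun ω => φ (s m ω i)) μ)
    (k : ℕ) :
    ∫ ω, φ (s (k + 1) ω i) ∂μ
      = (∫ ω, ∑ j ∈ Finset.range (k + 1),
            p i * (1 - p i) ^ j * φ (stilde (k + 1 - j) ω i) ∂μ)
        + (1 - p i) ^ (k + 1) * φ (s0 i) :=
  stmt_12_general μ idx hidxmeas p hp hident hindep ℱ hℱ s stilde s0 hs0 hstilde_meas hupd i φ hφ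
    hint hint' k
end
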